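/- arXiv:math/0606678 — 7 statements merged into one kernel-verified Lean document; each statement's English description precedes it below -/
import Mathlib

section
/- Let D be a nonempty bounded open subset of ℝ^d and let p : (0,∞) × D × D → [0,∞) be jointly measurable, satisfying the Chapman–Kolmogorov (semigroup) property with respect to Lebesgue measure on D: p(s+t,x,y) = ∫_D p(s,x,z) p(t,z,y) dz for all s,t > 0 and x,y ∈ D, and the sub-Markov property: ∫_D p(t,x,z) dz ≤ 1 and ∫_D p(t,z,y) dz ≤ 1 for all t > 0 and x,y ∈ D. Assume that for every t > 0 there is a constant c_t < ∞ with p(t,x,y) ≤ c_t for all x,y ∈ D, and that there exist a constant c > 0 and functions φ, ψ : D → (0,∞) such that ∫_0^∞ ∫_D p(s,x,z) dz ds ≤ c φ(x) and ∫_0^∞ ∫_D p(s,z,y) dz ds ≤ c ψ(y) for all x,y ∈ D. Then for every t > 0 there exists a constant C_t < ∞ such that p(t,x,y) ≤ C_t φ(x) ψ(y) for all x,y ∈ D. (Upper bound half of the intrinsic ultracontractivity theorem.) -/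
open MeasureTheory Set

/-- **Upper bound half of intrinsic ultracontractivity** (Theorem 3.8 of
Kim–Song, "Intrinsic Ultracontractivity for Non-symmetric Lévy Processes").
If the sub-Markov kernel density `p` on a nonempty bounded open set `D` is bounded for
each time `t`, and the expected exit times `∫_0^∞ ∫_D p(s,x,z) dz ds` (resp. its dual)
are dominated by `c φ` (resp. `c ψ`), then `p(t,x,y) ≤ C_t φ(x) ψ(y)`. -/
theorem intrinsic_ultracontractivity_upper
    {d : ℕ} (D : Set (EuclideanSpace ℝ (Fin d)))
    (hne : D.Nonempty) (hopen : IsOpen D) (hbdd : Bornology.IsBounded D)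
    (p : ℝ → EuclideanSpace ℝ (Fin d) → EuclideanSpace ℝ (Fin d) → ℝ)
    (hpmeas : Measurable (fun q : ℝ × EuclideanSpace ℝ (Fin d) × EuclideanSpace ℝ (Fin d) =>
      p q.1 q.2.1 q.2.2))
    (hpnonneg : ∀ t > (0:ℝ), ∀ x ∈ D, ∀ y ∈ D, 0 ≤ p t x y)
    (hCK : ∀ s > (0:ℝ), ∀ t > (0:ℝ), ∀ x ∈ D, ∀ y ∈ D,
      p (s + t) x y = ∫ z in D, p s x z * p t z y)
    (hsub₁ : ∀ t > (0:ℝ), ∀ x ∈ D, (∫ z in D, p t x z) ≤ 1)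
    (hsub₂ : ∀ t > (0:ℝ), ∀ y ∈ D, (∫ z in D, p t z y) ≤ 1)
    (hult : ∀ t > (0:ℝ), ∃ c : ℝ, ∀ x ∈ D, ∀ y ∈ D, p t x y ≤ c)
    (φ ψ : EuclideanSpace ℝ (Fin d) → ℝ)
    (hφpos : ∀ x ∈ D, 0 < φ x) (hψpos : ∀ y ∈ D, 0 < ψ y)
    (c : ℝ) (hc : 0 < c)
    (hφ : ∀ x ∈ D, (∫⁻ s in Ioi (0:ℝ), ENNReal.ofReal (∫ z in D, p s x z))
      ≤ ENNReal.ofReal (c * φ x))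
    (hψ : ∀ y ∈ D, (∫⁻ s in Ioi (0:ℝ), ENNReal.ofReal (∫ z in D, p s z y))
      ≤ ENNReal.ofReal (c * ψ y)) :
    ∀ t > (0:ℝ), ∃ C : ℝ, ∀ x ∈ D, ∀ y ∈ D, p t x y ≤ C * (φ x * ψ y) := by
  intro t ht
  have hDmeas : MeasurableSet D := hopen.measurableSet
  haveI hfin : IsFiniteMeasure (volume.restrict D) :=
    ⟨by rw [Measure.restrict_apply_univ]; exact hbdd.measure_lt_top⟩
  obtain ⟨x0, hx0⟩ := hne
  set s : ℝ := t / 3 with hs_def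
  have hs : 0 < s := by rw [hs_def]; exact div_pos ht (by norm_num)
  -- measurability in each variable
  have hm1 : ∀ (r : ℝ) (x : EuclideanSpace ℝ (Fin d)), Measurable (fun z => p r x z) :=
    fun r x => hpmeas.comp (measurable_const.prodMk (measurable_const.prodMk measurable_id))
  have hm2 : ∀ (r : ℝ) (y : EuclideanSpace ℝ (Fin d)), Measurable (fun z => p r z y) :=
    fun r y => hpmeas.comp (measurable_const.prodMk (measurable_id.prodMk measurable_const))
  -- nonnegativity of the bounds from hult
  have hultnn : ∀ r > (0:ℝ), ∃ M : ℝ, 0 ≤ M ∧ ∀ x ∈ D, ∀ y ∈ D, p r x y ≤ M := by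
    intro r hr
    obtain ⟨M, hM⟩ := hult r hr
    exact ⟨M, le_trans (hpnonneg r hr x0 hx0 x0 hx0) (hM x0 hx0 x0 hx0), hM⟩
  -- integrability in each variable
  have hint1 : ∀ r > (0:ℝ), ∀ x ∈ D, IntegrableOn (fun z => p r x z) D := by
    intro r hr x hx
    obtain ⟨M, _, hM⟩ := hultnn r hr
    refine Integrable.mono' (integrable_const M) ((hm1 r x).aestronglyMeasurable) ?_
    filter_upwards [ae_restrict_mem hDmeas] with z hz
    rw [Real.norm_eq_abs, abs_of_nonneg (hpnonneg r hr x hx z hz)]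
    exact hM x hx z hz
  have hint2 : ∀ r > (0:ℝ), ∀ y ∈ D, IntegrableOn (fun z => p r z y) D := by
    intro r hr y hy
    obtain ⟨M, _, hM⟩ := hultnn r hr
    refine Integrable.mono' (integrable_const M) ((hm2 r y).aestronglyMeasurable) ?_
    filter_upwards [ae_restrict_mem hDmeas] with z hz
    rw [Real.norm_eq_abs, abs_of_nonneg (hpnonneg r hr z hz y hy)]
    exact hM z hz y hy
  -- integrability on the product
  have hintP : ∀ (f : EuclideanSpace ℝ (Fin d) → EuclideanSpace ℝ (Fin d) → ℝ),
      Measurable (Function.uncurry f) → ∀ M : ℝ, (∀ a ∈ D, ∀ b ∈ D, ‖f a b‖ ≤ M) →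
      Integrable (Function.uncurry f) ((volume.restrict D).prod (volume.restrict D)) := by
    intro f hf M hM
    refine Integrable.mono' (integrable_const M) hf.aestronglyMeasurable ?_
    rw [Measure.prod_restrict]
    filter_upwards [ae_restrict_mem (hDmeas.prod hDmeas)] with q hq
    exact hM q.1 hq.1 q.2 hq.2
  -- monotonicity of the total mass in time, first variable
  have hmono1 : ∀ u > (0:ℝ), ∀ r > (0:ℝ), ∀ x ∈ D,
      (∫ z in D, p (u + r) x z) ≤ ∫ z in D, p u x z := by
    intro u hu r hr x hx
    obtain ⟨Mu, hMu0, hMu⟩ := hultnn u hu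
    obtain ⟨Mr, hMr0, hMr⟩ := hultnn r hr
    have h1 : (∫ z in D, p (u + r) x z) = ∫ z in D, ∫ w in D, p u x w * p r w z :=
      setIntegral_congr_fun hDmeas fun z hz => hCK u hu r hr x hx z hz
    have hInt : Integrable (Function.uncurry fun z w => p u x w * p r w z)
        ((volume.restrict D).prod (volume.restrict D)) := by
      refine hintP _ ?_ (Mu * Mr) ?_
      · exact (hpmeas.comp (measurable_const.prodMk (measurable_const.prodMk
          measurable_snd))).mul (hpmeas.comp (measurable_const.prodMk
          (measurable_snd.prodMk measurable_fst)))
      · intro a ha b hb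
        rw [Real.norm_eq_abs,
          abs_of_nonneg (mul_nonneg (hpnonneg u hu x hx b hb) (hpnonneg r hr b hb a ha))]
        exact mul_le_mul (hMu x hx b hb) (hMr b hb a ha) (hpnonneg r hr b hb a ha) hMu0
    have h2 : (∫ z in D, ∫ w in D, p u x w * p r w z)
        = ∫ w in D, ∫ z in D, p u x w * p r w z := integral_integral_swap hInt
    have h3 : (∫ w in D, ∫ z in D, p u x w * p r w z)
        = ∫ w in D, p u x w * ∫ z in D, p r w z := by
      simp_rw [integral_const_mul]
    rw [h1, h2, h3]
    refine integral_mono_of_nonneg ?_ (hint1 u hu x hx) ?_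
    · filter_upwards [ae_restrict_mem hDmeas] with w hw
      exact mul_nonneg (hpnonneg u hu x hx w hw)
        (setIntegral_nonneg hDmeas fun z hz => hpnonneg r hr w hw z hz)
    · filter_upwards [ae_restrict_mem hDmeas] with w hw
      calc p u x w * ∫ z in D, p r w z ≤ p u x w * 1 :=
            mul_le_mul_of_nonneg_left (hsub₁ r hr w hw) (hpnonneg u hu x hx w hw)
        _ = p u x w := mul_one _
  -- monotonicity of the total mass in time, second variable
  have hmono2 : ∀ u > (0:ℝ), ∀ r > (0:ℝ), ∀ y ∈ D,
      (∫ z in D, p (u + r) z y) ≤ ∫ z in D, p r z y := by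
    intro u hu r hr y hy
    obtain ⟨Mu, hMu0, hMu⟩ := hultnn u hu
    obtain ⟨Mr, hMr0, hMr⟩ := hultnn r hr
    have h1 : (∫ z in D, p (u + r) z y) = ∫ z in D, ∫ w in D, p u z w * p r w y :=
      setIntegral_congr_fun hDmeas fun z hz => hCK u hu r hr z hz y hy
    have hInt : Integrable (Function.uncurry fun z w => p u z w * p r w y)
        ((volume.restrict D).prod (volume.restrict D)) := by
      refine hintP _ ?_ (Mu * Mr) ?_
      · exact (hpmeas.comp (measurable_const.prodMk (measurable_fst.prodMk
          measurable_snd))).mul (hpmeas.comp (measurable_const.prodMk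
          (measurable_snd.prodMk measurable_const)))
      · intro a ha b hb
        rw [Real.norm_eq_abs,
          abs_of_nonneg (mul_nonneg (hpnonneg u hu a ha b hb) (hpnonneg r hr b hb y hy))]
        exact mul_le_mul (hMu a ha b hb) (hMr b hb y hy) (hpnonneg r hr b hb y hy) hMu0
    have h2 : (∫ z in D, ∫ w in D, p u z w * p r w y)
        = ∫ w in D, ∫ z in D, p u z w * p r w y := integral_integral_swap hInt
    have h3 : (∫ w in D, ∫ z in D, p u z w * p r w y)
        = ∫ w in D, (∫ z in D, p u z w) * p r w y := by
      simp_rw [integral_mul_const]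
    rw [h1, h2, h3]
    refine integral_mono_of_nonneg ?_ (hint2 r hr y hy) ?_
    · filter_upwards [ae_restrict_mem hDmeas] with w hw
      exact mul_nonneg (setIntegral_nonneg hDmeas fun z hz => hpnonneg u hu z hz w hw)
        (hpnonneg r hr w hw y hy)
    · filter_upwards [ae_restrict_mem hDmeas] with w hw
      calc (∫ z in D, p u z w) * p r w y ≤ 1 * p r w y :=
            mul_le_mul_of_nonneg_right (hsub₂ u hu w hw) (hpnonneg r hr w hw y hy)
        _ = p r w y := one_mul _
  -- Chebyshev for φ
  have hcheb1 : ∀ x ∈ D, s * (∫ z in D, p s x z) ≤ c * φ x := by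
    intro x hx
    set A := ∫ z in D, p s x z with hA
    have key : ∀ u ∈ Ioc (0:ℝ) s, A ≤ ∫ z in D, p u x z := by
      intro u hu
      rcases eq_or_lt_of_le hu.2 with h | h
      · rw [h]
      · have h' := hmono1 u hu.1 (s - u) (by linarith) x hx
        rw [add_sub_cancel] at h'
        exact hA.le.trans h'
    have hlin : ENNReal.ofReal s * ENNReal.ofReal A ≤ ENNReal.ofReal (c * φ x) := by
      calc ENNReal.ofReal s * ENNReal.ofReal A
          = ∫⁻ _ in Ioc (0:ℝ) s, ENNReal.ofReal A := by
            rw [setLIntegral_const, Real.volume_Ioc, sub_zero, mul_comm]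
        _ ≤ ∫⁻ u in Ioc (0:ℝ) s, ENNReal.ofReal (∫ z in D, p u x z) := by
            refine lintegral_mono_ae ?_
            filter_upwards [ae_restrict_mem measurableSet_Ioc] with u hu
            exact ENNReal.ofReal_le_ofReal (key u hu)
        _ ≤ ∫⁻ u in Ioi (0:ℝ), ENNReal.ofReal (∫ z in D, p u x z) :=
            lintegral_mono_set Ioc_subset_Ioi_self
        _ ≤ ENNReal.ofReal (c * φ x) := hφ x hx
    rw [← ENNReal.ofReal_mul hs.le] at hlin
    exact (ENNReal.ofReal_le_ofReal_iff (mul_nonneg hc.le (hφpos x hx).le)).mp hlin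
  -- Chebyshev for ψ
  have hcheb2 : ∀ y ∈ D, s * (∫ z in D, p s z y) ≤ c * ψ y := by
    intro y hy
    set B := ∫ z in D, p s z y with hB
    have key : ∀ u ∈ Ioc (0:ℝ) s, B ≤ ∫ z in D, p u z y := by
      intro u hu
      rcases eq_or_lt_of_le hu.2 with h | h
      · rw [h]
      · have h' := hmono2 (s - u) (by linarith) u hu.1 y hy
        rw [sub_add_cancel] at h'
        exact hB.le.trans h'
    have hlin : ENNReal.ofReal s * ENNReal.ofReal B ≤ ENNReal.ofReal (c * ψ y) := by
      calc ENNReal.ofReal s * ENNReal.ofReal B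
          = ∫⁻ _ in Ioc (0:ℝ) s, ENNReal.ofReal B := by
            rw [setLIntegral_const, Real.volume_Ioc, sub_zero, mul_comm]
        _ ≤ ∫⁻ u in Ioc (0:ℝ) s, ENNReal.ofReal (∫ z in D, p u z y) := by
            refine lintegral_mono_ae ?_
            filter_upwards [ae_restrict_mem measurableSet_Ioc] with u hu
            exact ENNReal.ofReal_le_ofReal (key u hu)
        _ ≤ ∫⁻ u in Ioi (0:ℝ), ENNReal.ofReal (∫ z in D, p u z y) :=
            lintegral_mono_set Ioc_subset_Ioi_self
        _ ≤ ENNReal.ofReal (c * ψ y) := hψ y hy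
    rw [← ENNReal.ofReal_mul hs.le] at hlin
    exact (ENNReal.ofReal_le_ofReal_iff (mul_nonneg hc.le (hψpos y hy).le)).mp hlin
  -- main construction
  obtain ⟨c', hc'⟩ := hult s hs
  have hc'0 : 0 ≤ c' := le_trans (hpnonneg s hs x0 hx0 x0 hx0) (hc' x0 hx0 x0 hx0)
  refine ⟨c' * (3 * c / t) ^ 2, fun x hx y hy => ?_⟩
  set A := ∫ z in D, p s x z with hA
  set B := ∫ w in D, p s w y with hB
  have hA0 : 0 ≤ A := setIntegral_nonneg hDmeas fun z hz => hpnonneg s hs x hx z hz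
  have hB0 : 0 ≤ B := setIntegral_nonneg hDmeas fun w hw => hpnonneg s hs w hw y hy
  have hAle : A ≤ 3 * c / t * φ x := by
    have h := hcheb1 x hx
    rw [← hA, hs_def] at h
    rw [div_mul_eq_mul_div, le_div_iff₀ ht]
    nlinarith
  have hBle : B ≤ 3 * c / t * ψ y := by
    have h := hcheb2 y hy
    rw [← hB, hs_def] at h
    rw [div_mul_eq_mul_div, le_div_iff₀ ht]
    nlinarith
  have hss : (0:ℝ) < s + s := by linarith
  have hts : t = s + (s + s) := by rw [hs_def]; ring
  have h1 : p t x y = ∫ z in D, p s x z * p (s + s) z y := by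
    rw [hts]; exact hCK s hs (s + s) hss x hx y hy
  have h2 : ∀ z ∈ D, p (s + s) z y ≤ c' * B := by
    intro z hz
    rw [hCK s hs s hs z hz y hy]
    calc (∫ w in D, p s z w * p s w y) ≤ ∫ w in D, c' * p s w y := by
          refine integral_mono_of_nonneg ?_ ((hint2 s hs y hy).const_mul c') ?_
          · filter_upwards [ae_restrict_mem hDmeas] with w hw
            exact mul_nonneg (hpnonneg s hs z hz w hw) (hpnonneg s hs w hw y hy)
          · filter_upwards [ae_restrict_mem hDmeas] with w hw
            exact mul_le_mul_of_nonneg_right (hc' z hz w hw) (hpnonneg s hs w hw y hy)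
      _ = c' * B := integral_const_mul c' _
  have h3 : p t x y ≤ A * (c' * B) := by
    rw [h1]
    calc (∫ z in D, p s x z * p (s + s) z y) ≤ ∫ z in D, p s x z * (c' * B) := by
          refine integral_mono_of_nonneg ?_ ((hint1 s hs x hx).mul_const _) ?_
          · filter_upwards [ae_restrict_mem hDmeas] with z hz
            exact mul_nonneg (hpnonneg s hs x hx z hz) (hpnonneg (s + s) hss z hz y hy)
          · filter_upwards [ae_restrict_mem hDmeas] with z hz
            exact mul_le_mul_of_nonneg_left (h2 z hz) (hpnonneg s hs x hx z hz)
      _ = A * (c' * B) := integral_mul_const _ _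
  have h4 : A * (c' * B) ≤ (3 * c / t * φ x) * (c' * (3 * c / t * ψ y)) :=
    mul_le_mul hAle (mul_le_mul_of_nonneg_left hBle hc'0) (mul_nonneg hc'0 hB0)
      (mul_nonneg (by positivity) (hφpos x hx).le)
  calc p t x y ≤ A * (c' * B) := h3
    _ ≤ (3 * c / t * φ x) * (c' * (3 * c / t * ψ y)) := h4
    _ = c' * (3 * c / t) ^ 2 * (φ x * ψ y) := by ring
end

section
/- Let D be a nonempty bounded open subset of ℝ^d and let p : (0,∞) × D × D → (0,∞) be such that for each t > 0 the function (x,y) ↦ p(t,x,y) is continuous and bounded on D × D, and p satisfies the Chapman–Kolmogorov (semigroup) property with respect to Lebesgue measure on D: p(s+t,x,y) = ∫_D p(s,x,z) p(t,z,y) dz for all s,t > 0 and x,y ∈ D. Let λ₀ ∈ ℝ and let φ, ψ : D → (0,∞) be bounded continuous functions satisfying, for all t > 0 and x,y ∈ D, ∫_D p(t,x,z) φ(z) dz = e^{λ₀ t} φ(x) and ∫_D p(t,z,y) ψ(z) dz = e^{λ₀ t} ψ(y). Assume intrinsic ultracontractivity holds: for every t > 0 there is c_t < ∞ with p(t,x,y)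 ≤ c_t φ(x) ψ(y) for all x,y ∈ D. Then for every t > 0 there exists C_t > 0 such that p(t,x,y) ≥ C_t φ(x) ψ(y) for all x,y ∈ D. -/
open MeasureTheory Set
open scoped ENNReal

/-!
Fix `s = t / 3` and a compact `K ⊆ D` whose complement in `D` is so small that, by the
ultracontractivity bound `p(s,x,z) ≤ c φ(x) ψ(z)`, the eigenfunction identity
`∫_D p(s,x,z) φ(z) dz = e^{λ₀ s} φ(x)` loses at most half its mass off `K`; hence
`∫_K p(s,x,z) dz ≳ φ(x)`, and dually `∫_K p(s,w,y) dw ≳ ψ(y)`. Writing `p(t,x,y)` as a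
triple Chapman–Kolmogorov integral, restricting the two inner variables to `K` and bounding
`p(s,·,·)` below on `K × K` by its positive minimum gives the lower bound.
-/

theorem IsCompact.exists_pos_forall_le {β : Type*} [TopologicalSpace β] {S : Set β}
    {f : β → ℝ} (hS : IsCompact S) (hf : ContinuousOn f S) (hpos : ∀ q ∈ S, 0 < f q) :
    ∃ m > 0, ∀ q ∈ S, m ≤ f q := by
  rcases S.eq_empty_or_nonempty with rfl | hne
  · exact ⟨1, one_pos, by simp⟩
  · obtain ⟨q, hq, hmin⟩ := hS.exists_isMinOn hne hf
    exact ⟨f q, hpos q hq, hmin⟩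

section

variable {X : Type*} [MeasurableSpace X] {μ : Measure X} {D K : Set X}

theorem mul_setIntegral_le_setIntegral_mul {f g : X → ℝ} {m : ℝ} (hD : MeasurableSet D)
    (hK : MeasurableSet K) (hKD : K ⊆ D) (hfg : IntegrableOn (fun z => f z * g z) D μ)
    (hf : IntegrableOn f K μ) (hf0 : ∀ z ∈ D, 0 ≤ f z) (hg0 : ∀ z ∈ D, 0 ≤ g z)
    (hm : ∀ z ∈ K, m ≤ g z) :
    m * ∫ z in K, f z ∂μ ≤ ∫ z in D, f z * g z ∂μ :=
  calc m * ∫ z in K, f z ∂μ = ∫ z in K, f z * m ∂μ := by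
        rw [← integral_const_mul]; simp_rw [mul_comm m]
    _ ≤ ∫ z in K, f z * g z ∂μ :=
        setIntegral_mono_on (hf.mul_const m) (hfg.mono_set hKD) hK fun z hz =>
          mul_le_mul_of_nonneg_left (hm z hz) (hf0 z (hKD hz))
    _ ≤ ∫ z in D, f z * g z ∂μ := by
        refine setIntegral_mono_set hfg ?_ hKD.eventuallyLE
        filter_upwards [ae_restrict_mem hD] with z hz
        exact mul_nonneg (hf0 z hz) (hg0 z hz)

variable [TopologicalSpace X] [OpensMeasurableSpace X] [T2Space X]

theorem MeasurableSet.exists_isCompact_measureReal_sdiff_le [μ.InnerRegularCompactLTTop]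
    (hD : MeasurableSet D) (hμD : μ D < ∞) {δ : ℝ} (hδ : 0 < δ) :
    ∃ K ⊆ D, IsCompact K ∧ μ.real (D \ K) ≤ δ := by
  obtain ⟨K, hKD, hK, hμ⟩ :=
    hD.exists_isCompact_sdiff_lt (μ := μ) hμD.ne (ENNReal.ofReal_pos.2 hδ).ne'
  exact ⟨K, hKD, hK, ENNReal.toReal_le_of_le_ofReal hδ.le hμ.le⟩

variable [IsFiniteMeasureOnCompacts μ]

theorem div_le_setIntegral_row_of_ultracontractive {k : X → X → ℝ} {φ ψ : X → ℝ}
    {c M ε : ℝ} {x : X} (hμD : μ D < ∞) (hK : IsCompact K) (hKD : K ⊆ D)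
    (hk : ContinuousOn (Function.uncurry k) (D ×ˢ D))
    (hkpos : ∀ x ∈ D, ∀ y ∈ D, 0 < k x y)
    (hφpos : ∀ x ∈ D, 0 < φ x) (hψ0 : ∀ y ∈ D, 0 ≤ ψ y)
    (hφM : ∀ x ∈ D, φ x ≤ M) (hψM : ∀ y ∈ D, ψ y ≤ M)
    (hIU : ∀ x ∈ D, ∀ y ∈ D, k x y ≤ c * (φ x * ψ y)) (hε : 0 < ε)
    (hsmall : c * M * M * μ.real (D \ K) ≤ ε / 2) (hx : x ∈ D)
    (heig : ∫ z in D, k x z * φ z ∂μ = ε * φ x) :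
    ε * φ x / (2 * M) ≤ ∫ z in K, k x z ∂μ := by
  have hφx := hφpos x hx
  have hM : 0 < M := hφx.trans_le (hφM x hx)
  have hc : 0 < c :=
    pos_of_mul_pos_left ((hkpos x hx x hx).trans_le (hIU x hx x hx))
      (mul_nonneg hφx.le (hψ0 x hx))
  -- a non-integrable function has integral `0`, so the eigenvalue identity forces integrability
  have hint : IntegrableOn (fun z => k x z * φ z) D μ :=
    Integrable.of_integral_ne_zero (by rw [heig]; positivity)
  have htail : ∫ z in D \ K, k x z * φ z ∂μ ≤ ε * φ x / 2 := by
    have hbound : ∀ z ∈ D \ K, ‖k x z * φ z‖ ≤ c * M * M * φ x := by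
      rintro z ⟨hz, -⟩
      rw [Real.norm_of_nonneg (mul_nonneg (hkpos x hx z hz).le (hφpos z hz).le)]
      calc k x z * φ z ≤ c * (φ x * ψ z) * φ z :=
            mul_le_mul_of_nonneg_right (hIU x hx z hz) (hφpos z hz).le
        _ = c * φ x * (ψ z * φ z) := by ring
        _ ≤ c * φ x * (M * M) := mul_le_mul_of_nonneg_left
            (mul_le_mul (hψM z hz) (hφM z hz) (hφpos z hz).le hM.le) (by positivity)
        _ = c * M * M * φ x := by ring
    calc ∫ z in D \ K, k x z * φ z ∂μ ≤ c * M * M * φ x * μ.real (D \ K) :=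
          (Real.le_norm_self _).trans <|
            norm_setIntegral_le_of_norm_le_const
              ((measure_mono sdiff_subset).trans_lt hμD) hbound
      _ = c * M * M * μ.real (D \ K) * φ x := by ring
      _ ≤ ε / 2 * φ x := by gcongr
      _ = ε * φ x / 2 := by ring
  have hmassK : ε * φ x / 2 ≤ ∫ z in K, k x z * φ z ∂μ := by
    have := setIntegral_sdiff hK.measurableSet hint hKD
    linarith
  have hweight : ∫ z in K, k x z * φ z ∂μ ≤ M * ∫ z in K, k x z ∂μ := by
    rw [← integral_const_mul]
    refine setIntegral_mono_on (hint.mono_set hKD) ?_ hK.measurableSet fun z hz => ?_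
    · exact (((hk.uncurry_left x hx).mono hKD).integrableOn_compact hK).const_mul M
    · rw [mul_comm M]
      exact mul_le_mul_of_nonneg_left (hφM z (hKD hz)) (hkpos x hx z (hKD hz)).le
  rw [div_le_iff₀ (by positivity)]
  linarith

theorem div_le_setIntegral_column_of_ultracontractive {k : X → X → ℝ} {φ ψ : X → ℝ}
    {c M ε : ℝ} {y : X} (hμD : μ D < ∞) (hK : IsCompact K) (hKD : K ⊆ D)
    (hk : ContinuousOn (Function.uncurry k) (D ×ˢ D))
    (hkpos : ∀ x ∈ D, ∀ y ∈ D, 0 < k x y)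
    (hφ0 : ∀ x ∈ D, 0 ≤ φ x) (hψpos : ∀ y ∈ D, 0 < ψ y)
    (hφM : ∀ x ∈ D, φ x ≤ M) (hψM : ∀ y ∈ D, ψ y ≤ M)
    (hIU : ∀ x ∈ D, ∀ y ∈ D, k x y ≤ c * (φ x * ψ y)) (hε : 0 < ε)
    (hsmall : c * M * M * μ.real (D \ K) ≤ ε / 2) (hy : y ∈ D)
    (heig : ∫ z in D, k z y * ψ z ∂μ = ε * ψ y) :
    ε * ψ y / (2 * M) ≤ ∫ z in K, k z y ∂μ :=
  div_le_setIntegral_row_of_ultracontractive (k := fun y z => k z y) hμD hK hKD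
    (hk.comp continuous_swap.continuousOn fun _ hq => ⟨hq.2, hq.1⟩)
    (fun y hy z hz => hkpos z hz y hy) hψpos hφ0 hψM hφM
    (fun y hy z hz => (hIU z hz y hy).trans_eq (by ring)) hε hsmall hy heig

theorem mul_setIntegral_mul_setIntegral_le {p : ℝ → X → X → ℝ} {s m : ℝ} {x y : X}
    (hD : MeasurableSet D) (hK : IsCompact K) (hKD : K ⊆ D) (hs : 0 < s)
    (hppos : ∀ t > (0:ℝ), ∀ x ∈ D, ∀ y ∈ D, 0 < p t x y)
    (hpcont : ContinuousOn (Function.uncurry (p s)) (D ×ˢ D))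
    (hCK : ∀ t₁ > (0:ℝ), ∀ t₂ > (0:ℝ), ∀ x ∈ D, ∀ y ∈ D,
      p (t₁ + t₂) x y = ∫ z in D, p t₁ x z * p t₂ z y ∂μ)
    (hm : ∀ z ∈ K, ∀ w ∈ K, m ≤ p s z w) (hx : x ∈ D) (hy : y ∈ D) :
    m * (∫ z in K, p s x z ∂μ) * (∫ w in K, p s w y ∂μ) ≤ p (s + (s + s)) x y := by
  have hs2 : 0 < s + s := by positivity
  have hint : ∀ {t u : ℝ} (ht : 0 < t) (hu : 0 < u), ∀ x ∈ D, ∀ y ∈ D,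
      IntegrableOn (fun z => p t x z * p u z y) D μ := fun ht hu x hx y hy =>
    Integrable.of_integral_ne_zero <| by
      rw [← hCK _ ht _ hu x hx y hy]; exact (hppos _ (by positivity) x hx y hy).ne'
  have hcol : ∀ z ∈ K, m * ∫ w in K, p s w y ∂μ ≤ p (s + s) z y := fun z hz => by
    rw [hCK s hs s hs z (hKD hz) y hy]
    simp_rw [mul_comm (p s z _)]
    refine mul_setIntegral_le_setIntegral_mul hD hK.measurableSet hKD ?_
      (((hpcont.uncurry_right y hy).mono hKD).integrableOn_compact hK)
      (fun w hw => (hppos s hs w hw y hy).le) (fun w hw => (hppos s hs z (hKD hz) w hw).le)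
      (hm z hz)
    simpa only [mul_comm] using hint hs hs z (hKD hz) y hy
  calc m * (∫ z in K, p s x z ∂μ) * (∫ w in K, p s w y ∂μ)
      = (m * ∫ w in K, p s w y ∂μ) * ∫ z in K, p s x z ∂μ := by ring
    _ ≤ ∫ z in D, p s x z * p (s + s) z y ∂μ :=
        mul_setIntegral_le_setIntegral_mul hD hK.measurableSet hKD (hint hs hs2 x hx y hy)
          (((hpcont.uncurry_left x hx).mono hKD).integrableOn_compact hK)
          (fun z hz => (hppos s hs x hx z hz).le) (fun z hz => (hppos _ hs2 z hz y hy).le)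
          hcol
    _ = p (s + (s + s)) x y := (hCK s hs _ hs2 x hx y hy).symm

theorem exists_pos_mul_le_of_ultracontractive [μ.InnerRegularCompactLTTop]
    {p : ℝ → X → X → ℝ} {φ ψ : X → ℝ} {s c M ε : ℝ}
    (hD : MeasurableSet D) (hμD : μ D < ∞) (hne : D.Nonempty) (hs : 0 < s)
    (hppos : ∀ t > (0:ℝ), ∀ x ∈ D, ∀ y ∈ D, 0 < p t x y)
    (hpcont : ContinuousOn (Function.uncurry (p s)) (D ×ˢ D))
    (hCK : ∀ t₁ > (0:ℝ), ∀ t₂ > (0:ℝ), ∀ x ∈ D, ∀ y ∈ D,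
      p (t₁ + t₂) x y = ∫ z in D, p t₁ x z * p t₂ z y ∂μ)
    (hφpos : ∀ x ∈ D, 0 < φ x) (hψpos : ∀ y ∈ D, 0 < ψ y)
    (hφM : ∀ x ∈ D, φ x ≤ M) (hψM : ∀ y ∈ D, ψ y ≤ M)
    (hIU : ∀ x ∈ D, ∀ y ∈ D, p s x y ≤ c * (φ x * ψ y)) (hε : 0 < ε)
    (hφeig : ∀ x ∈ D, ∫ z in D, p s x z * φ z ∂μ = ε * φ x)
    (hψeig : ∀ y ∈ D, ∫ z in D, p s z y * ψ z ∂μ = ε * ψ y) :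
    ∃ C, 0 < C ∧ ∀ x ∈ D, ∀ y ∈ D, C * (φ x * ψ y) ≤ p (s + (s + s)) x y := by
  obtain ⟨x₀, hx₀⟩ := hne
  have hM : 0 < M := (hφpos x₀ hx₀).trans_le (hφM x₀ hx₀)
  have hc : 0 < c := pos_of_mul_pos_left ((hppos s hs x₀ hx₀ x₀ hx₀).trans_le
    (hIU x₀ hx₀ x₀ hx₀)) (mul_pos (hφpos x₀ hx₀) (hψpos x₀ hx₀)).le
  obtain ⟨K, hKD, hK, hDK⟩ :=
    hD.exists_isCompact_measureReal_sdiff_le hμD (δ := ε / 2 / (c * M * M)) (by positivity)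
  have hsmall : c * M * M * μ.real (D \ K) ≤ ε / 2 := by
    rw [mul_comm]; exact (le_div_iff₀ (by positivity)).1 hDK
  obtain ⟨m, hm, hmK⟩ := (hK.prod hK).exists_pos_forall_le (hpcont.mono (prod_mono hKD hKD))
    fun q hq => hppos s hs _ (hKD hq.1) _ (hKD hq.2)
  refine ⟨m * (ε / (2 * M)) ^ 2, by positivity, fun x hx y hy => ?_⟩
  have hrow := div_le_setIntegral_row_of_ultracontractive hμD hK hKD hpcont (hppos s hs)
    hφpos (fun y hy => (hψpos y hy).le) hφM hψM hIU hε hsmall hx (hφeig x hx)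
  have hcol := div_le_setIntegral_column_of_ultracontractive hμD hK hKD hpcont (hppos s hs)
    (fun x hx => (hφpos x hx).le) hψpos hφM hψM hIU hε hsmall hy (hψeig y hy)
  have hrow_pos : 0 < ε * φ x / (2 * M) := div_pos (mul_pos hε (hφpos x hx)) (by positivity)
  have hcol_pos : 0 < ε * ψ y / (2 * M) := div_pos (mul_pos hε (hψpos y hy)) (by positivity)
  calc m * (ε / (2 * M)) ^ 2 * (φ x * ψ y)
      = m * (ε * φ x / (2 * M)) * (ε * ψ y / (2 * M)) := by ring
    _ ≤ m * (∫ z in K, p s x z ∂μ) * (∫ w in K, p s w y ∂μ) :=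
        mul_le_mul (mul_le_mul_of_nonneg_left hrow hm.le) hcol hcol_pos.le
          (mul_nonneg hm.le (hrow_pos.le.trans hrow))
    _ ≤ p (s + (s + s)) x y :=
        mul_setIntegral_mul_setIntegral_le hD hK hKD hs hppos hpcont hCK
          (fun z hz w hw => hmK (z, w) ⟨hz, hw⟩) hx hy

end

theorem intrinsic_ultracontractivity_lower_general
    {d : ℕ} (D : Set (EuclideanSpace ℝ (Fin d)))
    (hne : D.Nonempty) (hopen : IsOpen D) (hbdd : Bornology.IsBounded D)
    (p : ℝ → EuclideanSpace ℝ (Fin d) → EuclideanSpace ℝ (Fin d) → ℝ)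
    (hppos : ∀ t > (0:ℝ), ∀ x ∈ D, ∀ y ∈ D, 0 < p t x y)
    (hpcont : ∀ t > (0:ℝ),
      ContinuousOn (fun q : EuclideanSpace ℝ (Fin d) × EuclideanSpace ℝ (Fin d) =>
        p t q.1 q.2) (D ×ˢ D))
    (hCK : ∀ s > (0:ℝ), ∀ t > (0:ℝ), ∀ x ∈ D, ∀ y ∈ D,
      p (s + t) x y = ∫ z in D, p s x z * p t z y)
    (lam₀ : ℝ) (φ ψ : EuclideanSpace ℝ (Fin d) → ℝ)
    (hφpos : ∀ x ∈ D, 0 < φ x) (hψpos : ∀ y ∈ D, 0 < ψ y)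
    (hφbdd : ∃ M : ℝ, ∀ x ∈ D, φ x ≤ M) (hψbdd : ∃ M : ℝ, ∀ y ∈ D, ψ y ≤ M)
    (hφeig : ∀ t > (0:ℝ), ∀ x ∈ D, (∫ z in D, p t x z * φ z) = Real.exp (lam₀ * t) * φ x)
    (hψeig : ∀ t > (0:ℝ), ∀ y ∈ D, (∫ z in D, p t z y * ψ z) = Real.exp (lam₀ * t) * ψ y)
    (hIU : ∀ t > (0:ℝ), ∃ c : ℝ, ∀ x ∈ D, ∀ y ∈ D, p t x y ≤ c * (φ x * ψ y)) :
    ∀ t > (0:ℝ), ∃ C : ℝ, 0 < C ∧ ∀ x ∈ D, ∀ y ∈ D, C * (φ x * ψ y) ≤ p t x y := by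
  intro t ht
  have hs : 0 < t / 3 := by positivity
  obtain ⟨c, hc⟩ := hIU (t / 3) hs
  obtain ⟨Mφ, hMφ⟩ := hφbdd
  obtain ⟨Mψ, hMψ⟩ := hψbdd
  have ht3 : t / 3 + (t / 3 + t / 3) = t := by ring
  simpa only [ht3] using exists_pos_mul_le_of_ultracontractive hopen.measurableSet
    hbdd.measure_lt_top hne hs hppos (hpcont _ hs) hCK hφpos hψpos
    (fun x hx => (hMφ x hx).trans (le_max_left Mφ Mψ))
    (fun y hy => (hMψ y hy).trans (le_max_right Mφ Mψ)) hc (Real.exp_pos _)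
    (hφeig _ hs) (hψeig _ hs)

/-- **Lower bound half of intrinsic ultracontractivity** (Theorem 3.8 of Kim–Song,
quoting Proposition 2.4 of [KS4]). If the strictly positive, bounded and continuous
transition kernel `p` on a nonempty bounded open set `D` satisfies Chapman–Kolmogorov,
`φ` resp. `ψ` are strictly positive bounded continuous eigenfunctions of the semigroup
resp. its dual with eigenvalue `e^{lam₀ t}`, and the intrinsic ultracontractivity upper
bound `p(t,x,y) ≤ c_t φ(x) ψ(y)` holds, then the matching lower bound
`p(t,x,y) ≥ C_t φ(x) ψ(y)` holds. -/
theorem intrinsic_ultracontractivity_lower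
    {d : ℕ} (D : Set (EuclideanSpace ℝ (Fin d)))
    (hne : D.Nonempty) (hopen : IsOpen D) (hbdd : Bornology.IsBounded D)
    (p : ℝ → EuclideanSpace ℝ (Fin d) → EuclideanSpace ℝ (Fin d) → ℝ)
    (hppos : ∀ t > (0:ℝ), ∀ x ∈ D, ∀ y ∈ D, 0 < p t x y)
    (hpcont : ∀ t > (0:ℝ),
      ContinuousOn (fun q : EuclideanSpace ℝ (Fin d) × EuclideanSpace ℝ (Fin d) =>
        p t q.1 q.2) (D ×ˢ D))
    (hpbdd : ∀ t > (0:ℝ), ∃ M : ℝ, ∀ x ∈ D, ∀ y ∈ D, p t x y ≤ M)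
    (hCK : ∀ s > (0:ℝ), ∀ t > (0:ℝ), ∀ x ∈ D, ∀ y ∈ D,
      p (s + t) x y = ∫ z in D, p s x z * p t z y)
    (lam₀ : ℝ) (φ ψ : EuclideanSpace ℝ (Fin d) → ℝ)
    (hφpos : ∀ x ∈ D, 0 < φ x) (hψpos : ∀ y ∈ D, 0 < ψ y)
    (hφbdd : ∃ M : ℝ, ∀ x ∈ D, φ x ≤ M) (hψbdd : ∃ M : ℝ, ∀ y ∈ D, ψ y ≤ M)
    (hφcont : ContinuousOn φ D) (hψcont : ContinuousOn ψ D)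
    (hφeig : ∀ t > (0:ℝ), ∀ x ∈ D, (∫ z in D, p t x z * φ z) = Real.exp (lam₀ * t) * φ x)
    (hψeig : ∀ t > (0:ℝ), ∀ y ∈ D, (∫ z in D, p t z y * ψ z) = Real.exp (lam₀ * t) * ψ y)
    (hIU : ∀ t > (0:ℝ), ∃ c : ℝ, ∀ x ∈ D, ∀ y ∈ D, p t x y ≤ c * (φ x * ψ y)) :
    ∀ t > (0:ℝ), ∃ C : ℝ, 0 < C ∧ ∀ x ∈ D, ∀ y ∈ D, C * (φ x * ψ y) ≤ p t x y :=
  intrinsic_ultracontractivity_lower_general D hne hopen hbdd p hppos hpcont hCK lam₀ φ ψ hφpos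
    hψpos hφbdd hψbdd hφeig hψeig hIU
end

section
/- Let D be a nonempty bounded open subset of ℝ^d and let p : (0,∞) × D × D → (0,∞) satisfy the Chapman–Kolmogorov (semigroup) property with respect to Lebesgue measure on D: p(s+t,x,y) = ∫_D p(s,x,z) p(t,z,y) dz for all s,t > 0 and x,y ∈ D, with p(t,·,·) continuous and bounded on D × D for each t > 0. Let λ₀ < 0 and let φ, ψ : D → (0,∞) be bounded continuous functions with ∫_D φ(z)² dz = ∫_D ψ(z)² dz = 1 satisfying ∫_D p(t,x,z) φ(z) dz = e^{λ₀ t} φ(x) and ∫_D p(t,z,y) ψ(z) dz = e^{λ₀ t} ψ(y) for all t > 0 and x,y ∈ D. Assume that for every t > 0 there is c_t ≥ 1 with c_t^{-1} φ(x) ψ(y) ≤ p(t,x,y) ≤ c_t φ(x) ψ(y) for all x,y ∈ D. Then there exist positive constants c and ν such that | (e^{-λ₀ t} ∫_D φ(z) ψ(z) dz) · p(t,x,y)/(φ(x) ψ(y)) − 1 | ≤ c e^{-ν t} for all t > 1 and all x,y ∈ D. -/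
/-!
The renormalized kernel `q t = e^{-λ₀ t} p t` fixes `φ` on the right and `ψ` on the left. The lower
intrinsic ultracontractivity bound at time one makes `q 1 x · - a φ(x) ψ(·)` a nonnegative kernel
of `φ`-mass `φ(x) (1 - a m)`, where `m = ∫ φψ`. By Chapman–Kolmogorov this kernel maps
`q T - φ ⊗ ψ / m` to `q (1 + T) - φ ⊗ ψ / m`, so the relative error `|q t - φ ⊗ ψ / m| / φ ⊗ ψ`
contracts by the factor `1 - a m < 1` per unit of time, starting from a bound that the upper
estimate at time one provides for all `t > 1`.
-/

open MeasureTheory Set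

section

variable {α : Type*} [MeasurableSpace α] {μ : Measure α} {D : Set α}

theorem abs_setIntegral_mul_sub_le_of_minorant (hD : MeasurableSet D) {f g φ ψ : α → ℝ}
    {u v a m δ : ℝ} (hfg : IntegrableOn (fun z => f z * g z) D μ)
    (hfφ : IntegrableOn (fun z => f z * φ z) D μ) (hgψ : IntegrableOn (fun z => g z * ψ z) D μ)
    (hφψ : IntegrableOn (fun z => φ z * ψ z) D μ)
    (hu : ∫ z in D, f z * φ z ∂μ = u) (hv : ∫ z in D, g z * ψ z ∂μ = v)
    (hm : ∫ z in D, φ z * ψ z ∂μ = m) (hm0 : m ≠ 0) (hf : ∀ z ∈ D, a * (u * ψ z) ≤ f z)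
    (hg : ∀ z ∈ D, |g z - φ z * v / m| ≤ δ * (φ z * v)) :
    |∫ z in D, f z * g z ∂μ - u * v / m| ≤ δ * (u * v) * (1 - a * m) := by
  have hprod_expand : (fun z => (f z - a * (u * ψ z)) * (g z - φ z * v / m)) = fun z =>
      (f z * g z - v / m * (f z * φ z)) - (a * u * (g z * ψ z) - a * u * v / m * (φ z * ψ z)) := by
    funext z; ring
  have hmass_expand : (fun z => (f z - a * (u * ψ z)) * φ z) = fun z =>
      f z * φ z - a * u * (φ z * ψ z) := by
    funext z; ring
  have hprod : IntegrableOn (fun z => (f z - a * (u * ψ z)) * (g z - φ z * v / m)) D μ := by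
    rw [hprod_expand]
    exact (hfg.sub (hfφ.const_mul _)).sub ((hgψ.const_mul _).sub (hφψ.const_mul _))
  have hmass : IntegrableOn (fun z => (f z - a * (u * ψ z)) * φ z) D μ := by
    rw [hmass_expand]
    exact hfφ.sub (hφψ.const_mul _)
  have hprod_eq : ∫ z in D, (f z - a * (u * ψ z)) * (g z - φ z * v / m) ∂μ
      = ∫ z in D, f z * g z ∂μ - u * v / m := by
    rw [hprod_expand, integral_sub (by exact hfg.sub (hfφ.const_mul _))
        (by exact (hgψ.const_mul _).sub (hφψ.const_mul _)),
      integral_sub hfg (hfφ.const_mul _), integral_sub (hgψ.const_mul _) (hφψ.const_mul _),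
      integral_const_mul, integral_const_mul, integral_const_mul, hu, hv, hm]
    field_simp
    ring
  have hmass_eq : ∫ z in D, (f z - a * (u * ψ z)) * φ z ∂μ = u * (1 - a * m) := by
    rw [hmass_expand, integral_sub hfφ (hφψ.const_mul _), integral_const_mul, hu, hm]
    ring
  calc |∫ z in D, f z * g z ∂μ - u * v / m|
      = |∫ z in D, (f z - a * (u * ψ z)) * (g z - φ z * v / m) ∂μ| := by rw [hprod_eq]
    _ ≤ ∫ z in D, |(f z - a * (u * ψ z)) * (g z - φ z * v / m)| ∂μ :=
        abs_integral_le_integral_abs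
    _ ≤ ∫ z in D, δ * v * ((f z - a * (u * ψ z)) * φ z) ∂μ := by
        refine setIntegral_mono_on hprod.abs (hmass.const_mul _) hD fun z hz => ?_
        have hA : 0 ≤ f z - a * (u * ψ z) := sub_nonneg.2 (hf z hz)
        rw [abs_mul, abs_of_nonneg hA]
        nlinarith [mul_le_mul_of_nonneg_left (hg z hz) hA]
    _ = δ * (u * v) * (1 - a * m) := by rw [integral_const_mul, hmass_eq]; ring

theorem setIntegral_pos_of_forall_pos (hD : MeasurableSet D) (hμD : 0 < μ D) {f : α → ℝ}
    (hf : IntegrableOn f D μ) (hpos : ∀ z ∈ D, 0 < f z) : 0 < ∫ z in D, f z ∂μ := by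
  rw [setIntegral_pos_iff_support_of_nonneg_ae
    ((ae_restrict_iff' hD).2 (.of_forall fun z hz => (hpos z hz).le)) hf]
  exact hμD.trans_le (measure_mono fun z hz => ⟨(hpos z hz).ne', hz⟩)

theorem memLp_two_of_integral_sq_ne_zero {f : α → ℝ} (hf : AEStronglyMeasurable f μ)
    (h : ∫ z, f z ^ 2 ∂μ ≠ 0) : MemLp f 2 μ :=
  (memLp_two_iff_integrable_sq hf).2 (.of_integral_ne_zero h)

end

theorem exists_nat_pow_le_exp_mul {r t : ℝ} (hr0 : 0 < r) (hr1 : r < 1) (ht : 1 < t) :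
    ∃ n : ℕ, 1 < t - n ∧ r ^ n ≤ Real.exp (Real.log r * t) / r ^ 2 := by
  obtain ⟨n, hn1, hn2⟩ : ∃ n : ℕ, 1 < t - n ∧ t - 2 ≤ n := by
    refine ⟨⌈t - 2⌉₊, ?_, Nat.le_ceil _⟩
    rcases le_or_gt t 2 with h | h
    · rw [Nat.ceil_eq_zero.2 (by linarith)]; simpa using ht
    · linarith [Nat.ceil_lt_add_one (sub_nonneg.2 h.le)]
  refine ⟨n, hn1, ?_⟩
  calc r ^ n = r ^ (n : ℝ) := (Real.rpow_natCast r n).symm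
    _ ≤ r ^ (t - 2) := Real.rpow_le_rpow_of_exponent_ge hr0 hr1.le hn2
    _ = Real.exp (Real.log r * t) / r ^ 2 := by
        rw [Real.rpow_sub hr0, Real.rpow_def_of_pos hr0, Real.rpow_two]

theorem abs_mul_mul_div_sub_one_le {a b m w δ : ℝ} (hm : 0 < m) (hw : 0 < w)
    (h : |a * b - w / m| ≤ δ * w) : |a * m * b / w - 1| ≤ m * δ :=
  calc |a * m * b / w - 1| = m / w * |a * b - w / m| := by
        rw [← abs_of_pos (div_pos hm hw), ← abs_mul]
        congr 1
        field_simp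
    _ ≤ m / w * (δ * w) := mul_le_mul_of_nonneg_left h (div_pos hm hw).le
    _ = m * δ := by field_simp

/-- Models the renormalized kernel `e^{-λ₀ t} p(t, ·, ·)`, for which the principal eigenfunctions
`φ` and `ψ` are invariant. -/
structure IsGroundStateKernel {α : Type*} [MeasurableSpace α] (μ : Measure α) (D : Set α)
    (q : ℝ → α → α → ℝ) (φ ψ : α → ℝ) : Prop where
  pos : ∀ t > (0:ℝ), ∀ x ∈ D, ∀ y ∈ D, 0 < q t x y
  chapman_kolmogorov : ∀ s > (0:ℝ), ∀ t > (0:ℝ), ∀ x ∈ D, ∀ y ∈ D,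
    q (s + t) x y = ∫ z in D, q s x z * q t z y ∂μ
  integral_mul_right : ∀ t > (0:ℝ), ∀ x ∈ D, ∫ z in D, q t x z * φ z ∂μ = φ x
  integral_mul_left : ∀ t > (0:ℝ), ∀ y ∈ D, ∫ z in D, q t z y * ψ z ∂μ = ψ y
  right_pos : ∀ x ∈ D, 0 < φ x
  left_pos : ∀ y ∈ D, 0 < ψ y

namespace IsGroundStateKernel

variable {α : Type*} [MeasurableSpace α] {μ : Measure α} {D : Set α} {q : ℝ → α → α → ℝ}
  {φ ψ : α → ℝ} {x y : α}

theorem of_exp_mul {p : ℝ → α → α → ℝ} {lam₀ : ℝ}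
    (hp : ∀ t > (0:ℝ), ∀ x ∈ D, ∀ y ∈ D, 0 < p t x y)
    (hCK : ∀ s > (0:ℝ), ∀ t > (0:ℝ), ∀ x ∈ D, ∀ y ∈ D,
      p (s + t) x y = ∫ z in D, p s x z * p t z y ∂μ)
    (hφ : ∀ t > (0:ℝ), ∀ x ∈ D, ∫ z in D, p t x z * φ z ∂μ = Real.exp (lam₀ * t) * φ x)
    (hψ : ∀ t > (0:ℝ), ∀ y ∈ D, ∫ z in D, p t z y * ψ z ∂μ = Real.exp (lam₀ * t) * ψ y)
    (hφpos : ∀ x ∈ D, 0 < φ x) (hψpos : ∀ y ∈ D, 0 < ψ y) :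
    IsGroundStateKernel μ D (fun t x y => Real.exp (-(lam₀ * t)) * p t x y) φ ψ where
  pos t ht x hx y hy := mul_pos (Real.exp_pos _) (hp t ht x hx y hy)
  chapman_kolmogorov s hs t ht x hx y hy := by
    have hexp : Real.exp (-(lam₀ * (s + t)))
        = Real.exp (-(lam₀ * s)) * Real.exp (-(lam₀ * t)) := by
      rw [← Real.exp_add]; ring_nf
    simp only [hCK s hs t ht x hx y hy, ← integral_const_mul, hexp]
    congr 1; funext z; ring
  integral_mul_right t ht x hx := by
    simp only [mul_assoc]
    rw [integral_const_mul, hφ t ht x hx, ← mul_assoc, ← Real.exp_add, neg_add_cancel,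
      Real.exp_zero, one_mul]
  integral_mul_left t ht y hy := by
    simp only [mul_assoc]
    rw [integral_const_mul, hψ t ht y hy, ← mul_assoc, ← Real.exp_add, neg_add_cancel,
      Real.exp_zero, one_mul]
  right_pos := hφpos
  left_pos := hψpos

/-! The defining identities have positive left-hand sides, so their integrals are not the junk
value `0` of a non-integrable function. -/

theorem integrableOn_mul (hq : IsGroundStateKernel μ D q φ ψ) {s t : ℝ} (hs : 0 < s)
    (ht : 0 < t) (hx : x ∈ D) (hy : y ∈ D) : IntegrableOn (fun z => q s x z * q t z y) D μ :=
  Integrable.of_integral_ne_zero <| by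
    rw [← hq.chapman_kolmogorov s hs t ht x hx y hy]
    exact (hq.pos _ (add_pos hs ht) x hx y hy).ne'

theorem integrableOn_mul_right (hq : IsGroundStateKernel μ D q φ ψ) {t : ℝ} (ht : 0 < t)
    (hx : x ∈ D) : IntegrableOn (fun z => q t x z * φ z) D μ :=
  Integrable.of_integral_ne_zero <| by
    rw [hq.integral_mul_right t ht x hx]
    exact (hq.right_pos x hx).ne'

theorem integrableOn_mul_left (hq : IsGroundStateKernel μ D q φ ψ) {t : ℝ} (ht : 0 < t)
    (hy : y ∈ D) : IntegrableOn (fun z => q t z y * ψ z) D μ :=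
  Integrable.of_integral_ne_zero <| by
    rw [hq.integral_mul_left t ht y hy]
    exact (hq.left_pos y hy).ne'

theorem le_add_of_le (hq : IsGroundStateKernel μ D q φ ψ) (hD : MeasurableSet D) {s C : ℝ}
    (hs : 0 < s) (hC : ∀ x ∈ D, ∀ y ∈ D, q s x y ≤ C * (φ x * ψ y)) {t : ℝ} (ht : 0 < t)
    (hx : x ∈ D) (hy : y ∈ D) : q (t + s) x y ≤ C * (φ x * ψ y) :=
  calc q (t + s) x y = ∫ z in D, q t x z * q s z y ∂μ :=
        hq.chapman_kolmogorov t ht s hs x hx y hy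
    _ ≤ ∫ z in D, C * ψ y * (q t x z * φ z) ∂μ := by
        refine setIntegral_mono_on (hq.integrableOn_mul ht hs hx hy)
          ((hq.integrableOn_mul_right ht hx).const_mul _) hD fun z hz => ?_
        calc q t x z * q s z y ≤ q t x z * (C * (φ z * ψ y)) :=
              mul_le_mul_of_nonneg_left (hC z hz y hy) (hq.pos t ht x hx z hz).le
          _ = C * ψ y * (q t x z * φ z) := by ring
    _ = C * (φ x * ψ y) := by rw [integral_const_mul, hq.integral_mul_right t ht x hx]; ring

theorem abs_sub_div_le_of_le (hq : IsGroundStateKernel μ D q φ ψ) {m : ℝ} (hm0 : 0 < m)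
    {t C : ℝ} (ht : 0 < t) (hx : x ∈ D) (hy : y ∈ D) (hC : q t x y ≤ C * (φ x * ψ y)) :
    |q t x y - φ x * ψ y / m| ≤ (C + m⁻¹) * (φ x * ψ y) := by
  have hw : 0 < φ x * ψ y := mul_pos (hq.right_pos x hx) (hq.left_pos y hy)
  have hq0 := hq.pos t ht x hx y hy
  refine abs_sub_le_of_nonneg_of_le hq0.le ?_ (by positivity) ?_
  · nlinarith [inv_pos.2 hm0]
  · rw [div_eq_inv_mul]; nlinarith

theorem abs_sub_le_of_minorant (hq : IsGroundStateKernel μ D q φ ψ) (hD : MeasurableSet D)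
    (hφψ : IntegrableOn (fun z => φ z * ψ z) D μ) {m : ℝ} (hm : ∫ z in D, φ z * ψ z ∂μ = m)
    (hm0 : m ≠ 0) {s T a δ : ℝ} (hs : 0 < s) (hT : 0 < T)
    (ha : ∀ x ∈ D, ∀ y ∈ D, a * (φ x * ψ y) ≤ q s x y)
    (hδ : ∀ x ∈ D, ∀ y ∈ D, |q T x y - φ x * ψ y / m| ≤ δ * (φ x * ψ y))
    (hx : x ∈ D) (hy : y ∈ D) :
    |q (s + T) x y - φ x * ψ y / m| ≤ δ * (φ x * ψ y) * (1 - a * m) := by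
  rw [hq.chapman_kolmogorov s hs T hT x hx y hy]
  exact abs_setIntegral_mul_sub_le_of_minorant hD (hq.integrableOn_mul hs hT hx hy)
    (hq.integrableOn_mul_right hs hx) (hq.integrableOn_mul_left hT hy) hφψ
    (hq.integral_mul_right s hs x hx) (hq.integral_mul_left T hT y hy) hm hm0
    (fun z hz => ha x hx z hz) (fun z hz => hδ z hz y hy)

theorem abs_sub_le_pow (hq : IsGroundStateKernel μ D q φ ψ) (hD : MeasurableSet D)
    (hφψ : IntegrableOn (fun z => φ z * ψ z) D μ) {m : ℝ} (hm : ∫ z in D, φ z * ψ z ∂μ = m)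
    (hm0 : m ≠ 0) {a r K : ℝ} (ha : ∀ x ∈ D, ∀ y ∈ D, a * (φ x * ψ y) ≤ q 1 x y)
    (hr : 1 - a * m ≤ r) (hr0 : 0 ≤ r) (hK : 0 ≤ K)
    (hbase : ∀ t > (1:ℝ), ∀ x ∈ D, ∀ y ∈ D, |q t x y - φ x * ψ y / m| ≤ K * (φ x * ψ y))
    (n : ℕ) {t : ℝ} (ht : 1 < t) (hx : x ∈ D) (hy : y ∈ D) :
    |q (n + t) x y - φ x * ψ y / m| ≤ K * r ^ n * (φ x * ψ y) := by
  induction n generalizing x y with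
  | zero => simpa using hbase t ht x hx y hy
  | succ n ih =>
    have hw : 0 < φ x * ψ y := mul_pos (hq.right_pos x hx) (hq.left_pos y hy)
    rw [show ((n + 1 : ℕ) : ℝ) + t = 1 + (n + t) by push_cast; ring]
    calc |q (1 + (n + t)) x y - φ x * ψ y / m|
        ≤ K * r ^ n * (φ x * ψ y) * (1 - a * m) :=
          hq.abs_sub_le_of_minorant hD hφψ hm hm0 one_pos (by positivity) ha
            (fun _ hx _ hy => ih hx hy) hx hy
      _ ≤ K * r ^ n * (φ x * ψ y) * r := by gcongr
      _ = K * r ^ (n + 1) * (φ x * ψ y) := by ring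

theorem exists_abs_sub_le_exp (hq : IsGroundStateKernel μ D q φ ψ) (hD : MeasurableSet D)
    (hφψ : IntegrableOn (fun z => φ z * ψ z) D μ) {m : ℝ} (hm : ∫ z in D, φ z * ψ z ∂μ = m)
    (hm0 : 0 < m) {a C : ℝ} (ha0 : 0 < a) (hC0 : 0 ≤ C)
    (ha : ∀ x ∈ D, ∀ y ∈ D, a * (φ x * ψ y) ≤ q 1 x y)
    (hC : ∀ x ∈ D, ∀ y ∈ D, q 1 x y ≤ C * (φ x * ψ y)) :
    ∃ K > (0:ℝ), ∃ ν > (0:ℝ), ∀ t > (1:ℝ), ∀ x ∈ D, ∀ y ∈ D,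
      |q t x y - φ x * ψ y / m| ≤ K * Real.exp (-(ν * t)) * (φ x * ψ y) := by
  set r := max (1 - a * m) (1 / 2)
  have hr0 : 0 < r := lt_max_of_lt_right one_half_pos
  have hr1 : r < 1 := max_lt (by linarith [mul_pos ha0 hm0]) one_half_lt_one
  have hbase : ∀ t > (1:ℝ), ∀ x ∈ D, ∀ y ∈ D,
      |q t x y - φ x * ψ y / m| ≤ (C + m⁻¹) * (φ x * ψ y) := fun t ht x hx y hy =>
    hq.abs_sub_div_le_of_le hm0 (by linarith) hx hy
      (by simpa using hq.le_add_of_le hD one_pos hC (sub_pos.2 ht) hx hy)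
  refine ⟨(C + m⁻¹) / r ^ 2, by positivity, -Real.log r, neg_pos.2 (Real.log_neg hr0 hr1),
    fun t ht x hx y hy => ?_⟩
  obtain ⟨n, hn, hrn⟩ := exists_nat_pow_le_exp_mul hr0 hr1 ht
  have hw : 0 < φ x * ψ y := mul_pos (hq.right_pos x hx) (hq.left_pos y hy)
  calc |q t x y - φ x * ψ y / m| = |q (n + (t - n)) x y - φ x * ψ y / m| := by
        rw [add_sub_cancel]
    _ ≤ (C + m⁻¹) * r ^ n * (φ x * ψ y) :=
        hq.abs_sub_le_pow hD hφψ hm hm0.ne' ha (le_max_left _ _) hr0.le (by positivity) hbase n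
          hn hx hy
    _ ≤ (C + m⁻¹) * (Real.exp (Real.log r * t) / r ^ 2) * (φ x * ψ y) := by gcongr
    _ = (C + m⁻¹) / r ^ 2 * Real.exp (-(-Real.log r * t)) * (φ x * ψ y) := by
        rw [neg_mul, neg_neg]; ring

end IsGroundStateKernel

theorem exponential_convergence_to_equilibrium_general
    {d : ℕ} (D : Set (EuclideanSpace ℝ (Fin d)))
    (hne : D.Nonempty) (hopen : IsOpen D)
    (p : ℝ → EuclideanSpace ℝ (Fin d) → EuclideanSpace ℝ (Fin d) → ℝ)
    (hppos : ∀ t > (0:ℝ), ∀ x ∈ D, ∀ y ∈ D, 0 < p t x y)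
    (hCK : ∀ s > (0:ℝ), ∀ t > (0:ℝ), ∀ x ∈ D, ∀ y ∈ D,
      p (s + t) x y = ∫ z in D, p s x z * p t z y)
    (lam₀ : ℝ)
    (φ ψ : EuclideanSpace ℝ (Fin d) → ℝ)
    (hφpos : ∀ x ∈ D, 0 < φ x) (hψpos : ∀ y ∈ D, 0 < ψ y)
    (hφcont : ContinuousOn φ D) (hψcont : ContinuousOn ψ D)
    (hφnorm : (∫ z in D, (φ z) ^ 2) = 1) (hψnorm : (∫ z in D, (ψ z) ^ 2) = 1)
    (hφeig : ∀ t > (0:ℝ), ∀ x ∈ D, (∫ z in D, p t x z * φ z) = Real.exp (lam₀ * t) * φ x)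
    (hψeig : ∀ t > (0:ℝ), ∀ y ∈ D, (∫ z in D, p t z y * ψ z) = Real.exp (lam₀ * t) * ψ y)
    (hIU : ∀ t > (0:ℝ), ∃ c : ℝ, 1 ≤ c ∧ ∀ x ∈ D, ∀ y ∈ D,
      c⁻¹ * (φ x * ψ y) ≤ p t x y ∧ p t x y ≤ c * (φ x * ψ y)) :
    ∃ c > (0:ℝ), ∃ ν > (0:ℝ), ∀ t > (1:ℝ), ∀ x ∈ D, ∀ y ∈ D,
      |Real.exp (-(lam₀ * t)) * (∫ z in D, φ z * ψ z) * p t x y / (φ x * ψ y) - 1|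
        ≤ c * Real.exp (-(ν * t)) := by
  have hD : MeasurableSet D := hopen.measurableSet
  have hq := IsGroundStateKernel.of_exp_mul hppos hCK hφeig hψeig hφpos hψpos
  have hφ : MemLp φ 2 (volume.restrict D) :=
    memLp_two_of_integral_sq_ne_zero (hφcont.aestronglyMeasurable hD) (by simp [hφnorm])
  have hψ : MemLp ψ 2 (volume.restrict D) :=
    memLp_two_of_integral_sq_ne_zero (hψcont.aestronglyMeasurable hD) (by simp [hψnorm])
  have hφψ : IntegrableOn (fun z => φ z * ψ z) D := hφ.integrable_mul hψ
  set m := ∫ z in D, φ z * ψ z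
  have hm : 0 < m := setIntegral_pos_of_forall_pos hD (hopen.measure_pos volume hne) hφψ
    fun z hz => mul_pos (hφpos z hz) (hψpos z hz)
  obtain ⟨c, hc, hcIU⟩ := hIU 1 one_pos
  obtain ⟨K, hK, ν, hν, hdecay⟩ := hq.exists_abs_sub_le_exp hD hφψ rfl hm
    (a := Real.exp (-(lam₀ * 1)) * c⁻¹) (C := Real.exp (-(lam₀ * 1)) * c) (by positivity)
    (by positivity)
    (fun x hx y hy => by
      rw [mul_assoc]; exact mul_le_mul_of_nonneg_left (hcIU x hx y hy).1 (Real.exp_pos _).le)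
    (fun x hx y hy => by
      rw [mul_assoc]; exact mul_le_mul_of_nonneg_left (hcIU x hx y hy).2 (Real.exp_pos _).le)
  refine ⟨m * K, by positivity, ν, hν, fun t ht x hx y hy => ?_⟩
  exact (abs_mul_mul_div_sub_one_le hm (mul_pos (hφpos x hx) (hψpos y hy))
    (hdecay t ht x hx y hy)).trans_eq (by ring)

/-- **Theorem 3.10 of Kim–Song**: for the transition density `p` of a killed non-symmetric
Lévy process on a nonempty bounded open set `D` with two-sided intrinsic
ultracontractivity bounds `c_t⁻¹ φ(x)ψ(y) ≤ p(t,x,y) ≤ c_t φ(x)ψ(y)` in terms of the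
`L²`-normalized principal eigenfunctions `φ, ψ` (with common eigenvalue `λ₀ < 0`), there
exist `c, ν > 0` such that
`|(e^{-λ₀ t} ∫_D φψ) p(t,x,y)/(φ(x)ψ(y)) − 1| ≤ c e^{-ν t}` for all `t > 1`, `x,y ∈ D`. -/
theorem exponential_convergence_to_equilibrium
    {d : ℕ} (D : Set (EuclideanSpace ℝ (Fin d)))
    (hne : D.Nonempty) (hopen : IsOpen D) (hbdd : Bornology.IsBounded D)
    (p : ℝ → EuclideanSpace ℝ (Fin d) → EuclideanSpace ℝ (Fin d) → ℝ)
    (hppos : ∀ t > (0:ℝ), ∀ x ∈ D, ∀ y ∈ D, 0 < p t x y)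
    (hpcont : ∀ t > (0:ℝ),
      ContinuousOn (fun q : EuclideanSpace ℝ (Fin d) × EuclideanSpace ℝ (Fin d) =>
        p t q.1 q.2) (D ×ˢ D))
    (hpbdd : ∀ t > (0:ℝ), ∃ M : ℝ, ∀ x ∈ D, ∀ y ∈ D, p t x y ≤ M)
    (hCK : ∀ s > (0:ℝ), ∀ t > (0:ℝ), ∀ x ∈ D, ∀ y ∈ D,
      p (s + t) x y = ∫ z in D, p s x z * p t z y)
    (lam₀ : ℝ) (hlam₀ : lam₀ < 0)
    (φ ψ : EuclideanSpace ℝ (Fin d) → ℝ)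
    (hφpos : ∀ x ∈ D, 0 < φ x) (hψpos : ∀ y ∈ D, 0 < ψ y)
    (hφbdd : ∃ M : ℝ, ∀ x ∈ D, φ x ≤ M) (hψbdd : ∃ M : ℝ, ∀ y ∈ D, ψ y ≤ M)
    (hφcont : ContinuousOn φ D) (hψcont : ContinuousOn ψ D)
    (hφnorm : (∫ z in D, (φ z) ^ 2) = 1) (hψnorm : (∫ z in D, (ψ z) ^ 2) = 1)
    (hφeig : ∀ t > (0:ℝ), ∀ x ∈ D, (∫ z in D, p t x z * φ z) = Real.exp (lam₀ * t) * φ x)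
    (hψeig : ∀ t > (0:ℝ), ∀ y ∈ D, (∫ z in D, p t z y * ψ z) = Real.exp (lam₀ * t) * ψ y)
    (hIU : ∀ t > (0:ℝ), ∃ c : ℝ, 1 ≤ c ∧ ∀ x ∈ D, ∀ y ∈ D,
      c⁻¹ * (φ x * ψ y) ≤ p t x y ∧ p t x y ≤ c * (φ x * ψ y)) :
    ∃ c > (0:ℝ), ∃ ν > (0:ℝ), ∀ t > (1:ℝ), ∀ x ∈ D, ∀ y ∈ D,
      |Real.exp (-(lam₀ * t)) * (∫ z in D, φ z * ψ z) * p t x y / (φ x * ψ y) - 1|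
        ≤ c * Real.exp (-(ν * t)) :=
  exponential_convergence_to_equilibrium_general D hne hopen p hppos hCK lam₀ φ ψ hφpos hψpos hφcont
    hψcont hφnorm hψnorm hφeig hψeig hIU
end

section
/- Let D be a nonempty bounded open subset of ℝ^d and let p : (0,∞) × D × D → (0,∞) satisfy the Chapman–Kolmogorov (semigroup) property with respect to Lebesgue measure on D: p(s+t,x,y) = ∫_D p(s,x,z) p(t,z,y) dz for all s,t > 0 and x,y ∈ D. Suppose there exist functions φ, ψ : D → (0,∞) such that for every t > 0 there is a constant c_t ≥ 1 with c_t^{-1} φ(x) ψ(y) ≤ p(t,x,y) ≤ c_t φ(x) ψ(y) for all x,y ∈ D. Then for each u > 0 there exists a constant c = c(u) > 0 such that for all s,t ≥ u and all v,x,y,z ∈ D: p(t,x,y)/p(t,x,z) ≥ c · p(s,v,y)/p(s,v,z) and p(t,y,x)/p(t,z,x) ≥ c · p(s,y,v)/p(s,z,v). -/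
open MeasureTheory Set

/-- **Parabolic boundary Harnack principle** (Corollary 3.13 of Kim–Song): if the strictly
positive transition kernel `p` of a killed non-symmetric Lévy process on a nonempty
bounded open set `D` satisfies Chapman–Kolmogorov and the two-sided intrinsic
ultracontractivity estimate `c_t⁻¹ φ(x)ψ(y) ≤ p(t,x,y) ≤ c_t φ(x)ψ(y)`, then for each
`u > 0` there is `c = c(u) > 0` such that for all `s,t ≥ u` and `v,x,y,z ∈ D`,
`p(t,x,y)/p(t,x,z) ≥ c p(s,v,y)/p(s,v,z)` and `p(t,y,x)/p(t,z,x) ≥ c p(s,y,v)/p(s,z,v)`. -/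
theorem parabolic_boundary_harnack_principle
    {d : ℕ} (D : Set (EuclideanSpace ℝ (Fin d)))
    (hne : D.Nonempty) (hopen : IsOpen D) (hbdd : Bornology.IsBounded D)
    (p : ℝ → EuclideanSpace ℝ (Fin d) → EuclideanSpace ℝ (Fin d) → ℝ)
    (hppos : ∀ t > (0:ℝ), ∀ x ∈ D, ∀ y ∈ D, 0 < p t x y)
    (hCK : ∀ s > (0:ℝ), ∀ t > (0:ℝ), ∀ x ∈ D, ∀ y ∈ D,
      p (s + t) x y = ∫ z in D, p s x z * p t z y)
    (φ ψ : EuclideanSpace ℝ (Fin d) → ℝ)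
    (hφpos : ∀ x ∈ D, 0 < φ x) (hψpos : ∀ y ∈ D, 0 < ψ y)
    (hIU : ∀ t > (0:ℝ), ∃ c : ℝ, 1 ≤ c ∧ ∀ x ∈ D, ∀ y ∈ D,
      c⁻¹ * (φ x * ψ y) ≤ p t x y ∧ p t x y ≤ c * (φ x * ψ y)) :
    ∀ u > (0:ℝ), ∃ c > (0:ℝ), ∀ s ≥ u, ∀ t ≥ u,
      ∀ v ∈ D, ∀ x ∈ D, ∀ y ∈ D, ∀ z ∈ D,
        c * (p s v y / p s v z) ≤ p t x y / p t x z ∧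
        c * (p s y v / p s z v) ≤ p t y x / p t z x := by
  intro u hu
  have ha : (0:ℝ) < u / 2 := by linarith
  obtain ⟨c0, hc01, hc0⟩ := hIU (u / 2) ha
  have hc0pos : (0:ℝ) < c0 := by linarith
  set K : ℝ := c0 ^ 2 with hK
  have hKpos : (0:ℝ) < K := by positivity
  -- pointwise comparison of the kernel at time u/2 in the second variable
  have hpt2 : ∀ w ∈ D, ∀ y ∈ D, ∀ z ∈ D,
      p (u/2) w y ≤ K * (ψ y / ψ z) * p (u/2) w z := by
    intro w hw y hy z hz
    have h1 := (hc0 w hw y hy).2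
    have h2 := (hc0 w hw z hz).1
    have hφw := hφpos w hw
    have hψy := hψpos y hy
    have hψz := hψpos z hz
    have h2' : φ w * ψ z ≤ c0 * p (u/2) w z := by
      have := mul_le_mul_of_nonneg_left h2 hc0pos.le
      rwa [mul_inv_cancel_left₀ (ne_of_gt hc0pos)] at this
    calc p (u/2) w y ≤ c0 * (φ w * ψ y) := h1
      _ = (c0 * (φ w * ψ z)) * (ψ y / ψ z) := by field_simp
      _ ≤ (c0 * (c0 * p (u/2) w z)) * (ψ y / ψ z) := by
          apply mul_le_mul_of_nonneg_right (mul_le_mul_of_nonneg_left h2' hc0pos.le)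
          positivity
      _ = K * (ψ y / ψ z) * p (u/2) w z := by rw [hK]; ring
  -- pointwise comparison of the kernel at time u/2 in the first variable
  have hpt1 : ∀ w ∈ D, ∀ y ∈ D, ∀ z ∈ D,
      p (u/2) y w ≤ K * (φ y / φ z) * p (u/2) z w := by
    intro w hw y hy z hz
    have h1 := (hc0 y hy w hw).2
    have h2 := (hc0 z hz w hw).1
    have hψw := hψpos w hw
    have hφy := hφpos y hy
    have hφz := hφpos z hz
    have h2' : φ z * ψ w ≤ c0 * p (u/2) z w := by
      have := mul_le_mul_of_nonneg_left h2 hc0pos.le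
      rwa [mul_inv_cancel_left₀ (ne_of_gt hc0pos)] at this
    calc p (u/2) y w ≤ c0 * (φ y * ψ w) := h1
      _ = (c0 * (φ z * ψ w)) * (φ y / φ z) := by field_simp
      _ ≤ (c0 * (c0 * p (u/2) z w)) * (φ y / φ z) := by
          apply mul_le_mul_of_nonneg_right (mul_le_mul_of_nonneg_left h2' hc0pos.le)
          positivity
      _ = K * (φ y / φ z) * p (u/2) z w := by rw [hK]; ring
  -- key estimate for ratios in the second variable, uniformly in t ≥ u
  have key : ∀ t ≥ u, ∀ x ∈ D, ∀ y ∈ D, ∀ z ∈ D,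
      p t x y ≤ K * (ψ y / ψ z) * p t x z := by
    intro t ht x hx y hy z hz
    have hta : (0:ℝ) < t - u/2 := by linarith
    have htpos : (0:ℝ) < t := by linarith
    have hEy : p t x y = ∫ w in D, p (t - u/2) x w * p (u/2) w y := by
      have := hCK (t - u/2) hta (u/2) ha x hx y hy
      rwa [sub_add_cancel] at this
    have hEz : p t x z = ∫ w in D, p (t - u/2) x w * p (u/2) w z := by
      have := hCK (t - u/2) hta (u/2) ha x hx z hz
      rwa [sub_add_cancel] at this
    have hInt : Integrable (fun w => p (t - u/2) x w * p (u/2) w z)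
        (volume.restrict D) := by
      by_contra h
      exact absurd (hEz.trans (integral_undef h))
        (ne_of_gt (hppos t htpos x hx z hz))
    rw [hEy, hEz, ← integral_const_mul]
    apply integral_mono_of_nonneg
    · exact ae_restrict_of_forall_mem hopen.measurableSet fun w hw => by
        have := hppos (t - u/2) hta x hx w hw
        have := hppos (u/2) ha w hw y hy
        positivity
    · exact hInt.const_mul _
    · refine ae_restrict_of_forall_mem hopen.measurableSet fun w hw => ?_
      have h1 := hpt2 w hw y hy z hz
      have hxw := (hppos (t - u/2) hta x hx w hw).le
      calc p (t - u/2) x w * p (u/2) w y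
          ≤ p (t - u/2) x w * (K * (ψ y / ψ z) * p (u/2) w z) :=
            mul_le_mul_of_nonneg_left h1 hxw
        _ = K * (ψ y / ψ z) * (p (t - u/2) x w * p (u/2) w z) := by ring
  -- key estimate for ratios in the first variable, uniformly in t ≥ u
  have keyL : ∀ t ≥ u, ∀ x ∈ D, ∀ y ∈ D, ∀ z ∈ D,
      p t y x ≤ K * (φ y / φ z) * p t z x := by
    intro t ht x hx y hy z hz
    have hta : (0:ℝ) < t - u/2 := by linarith
    have htpos : (0:ℝ) < t := by linarith
    have hEy : p t y x = ∫ w in D, p (u/2) y w * p (t - u/2) w x := by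
      have := hCK (u/2) ha (t - u/2) hta y hy x hx
      rwa [add_sub_cancel] at this
    have hEz : p t z x = ∫ w in D, p (u/2) z w * p (t - u/2) w x := by
      have := hCK (u/2) ha (t - u/2) hta z hz x hx
      rwa [add_sub_cancel] at this
    have hInt : Integrable (fun w => p (u/2) z w * p (t - u/2) w x)
        (volume.restrict D) := by
      by_contra h
      exact absurd (hEz.trans (integral_undef h))
        (ne_of_gt (hppos t htpos z hz x hx))
    rw [hEy, hEz, ← integral_const_mul]
    apply integral_mono_of_nonneg
    · exact ae_restrict_of_forall_mem hopen.measurableSet fun w hw => by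
        have := hppos (t - u/2) hta w hw x hx
        have := hppos (u/2) ha y hy w hw
        positivity
    · exact hInt.const_mul _
    · refine ae_restrict_of_forall_mem hopen.measurableSet fun w hw => ?_
      have h1 := hpt1 w hw y hy z hz
      have hwx := (hppos (t - u/2) hta w hw x hx).le
      calc p (u/2) y w * p (t - u/2) w x
          ≤ (K * (φ y / φ z) * p (u/2) z w) * p (t - u/2) w x :=
            mul_le_mul_of_nonneg_right h1 hwx
        _ = K * (φ y / φ z) * (p (u/2) z w * p (t - u/2) w x) := by ring
  refine ⟨(K^2)⁻¹, by positivity, fun s hs t ht v hv x hx y hy z hz => ?_⟩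
  have hspos : (0:ℝ) < s := by linarith
  have htpos : (0:ℝ) < t := by linarith
  constructor
  · -- second-variable inequality
    have hψy := hψpos y hy
    have hψz := hψpos z hz
    set r : ℝ := ψ y / ψ z with hr
    have hrpos : 0 < r := by positivity
    have h1 : p s v y ≤ K * r * p s v z := key s hs v hv y hy z hz
    have h2 : p t x z ≤ K * r⁻¹ * p t x y := by
      have := key t ht x hx z hz y hy
      rwa [show ψ z / ψ y = r⁻¹ by rw [hr]; field_simp] at this
    have hA := hppos t htpos x hx y hy
    have hB := hppos t htpos x hx z hz
    have hPs := hppos s hspos v hv y hy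
    have hQs := hppos s hspos v hv z hz
    have hm : p s v y * p t x z ≤ K^2 * (p s v z * p t x y) := by
      calc p s v y * p t x z ≤ (K * r * p s v z) * (K * r⁻¹ * p t x y) :=
            mul_le_mul h1 h2 hB.le (by positivity)
        _ = K^2 * (p s v z * p t x y) := by field_simp
    rw [← mul_div_assoc, div_le_div_iff₀ hQs hB]
    rw [mul_assoc, inv_mul_le_iff₀ (by positivity)]
    nlinarith [hm]
  · -- first-variable inequality
    have hφy := hφpos y hy
    have hφz := hφpos z hz
    set r : ℝ := φ y / φ z with hr
    have hrpos : 0 < r := by positivity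
    have h1 : p s y v ≤ K * r * p s z v := keyL s hs v hv y hy z hz
    have h2 : p t z x ≤ K * r⁻¹ * p t y x := by
      have := keyL t ht x hx z hz y hy
      rwa [show φ z / φ y = r⁻¹ by rw [hr]; field_simp] at this
    have hA := hppos t htpos y hy x hx
    have hB := hppos t htpos z hz x hx
    have hPs := hppos s hspos y hy v hv
    have hQs := hppos s hspos z hz v hv
    have hm : p s y v * p t z x ≤ K^2 * (p s z v * p t y x) := by
      calc p s y v * p t z x ≤ (K * r * p s z v) * (K * r⁻¹ * p t y x) :=
            mul_le_mul h1 h2 hB.le (by positivity)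
        _ = K^2 * (p s z v * p t y x) := by field_simp
    rw [← mul_div_assoc, div_le_div_iff₀ hQs hB]
    rw [mul_assoc, inv_mul_le_iff₀ (by positivity)]
    nlinarith [hm]
end

section
/- Let D be a nonempty bounded open subset of ℝ^d, let p : (0,∞) × D × D → [0,∞) be jointly measurable, and set G(x,y) = ∫_0^∞ p(t,x,y) dt, assumed finite for all x,y ∈ D. Let λ₀ < 0, t₀ > 0 and let φ₀ : D → (0,∞) be a bounded function satisfying ∫_D G(x,z) φ₀(z) dz = (−λ₀)^{-1} φ₀(x) and ∫_D p(t₀,x,z) φ₀(z) dz = e^{λ₀ t₀} φ₀(x) for all x ∈ D. Suppose there are a measurable set B₂ ⊆ D with inf_{z ∈ B₂} φ₀(z) > 0 and a constant c₁ > 0 such that ∫_{D∖B₂} G(x,z) dz ≤ c₁ ∫_{B₂} p(t₀,x,z) dz for all x ∈ D. Then there is a constant C > 0 such that ∫_D G(x,z) dz ≤ C φ₀(x) for all x ∈ D. -/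
/-!
On `B₂` the eigenfunction is at least `m = inf_{B₂} φ₀ > 0`, so any nonnegative kernel `k`
satisfies `∫_{B₂} k(x,·) ≤ m⁻¹ ∫_D k(x,·) φ₀`. Applied to `G` and to `p(t₀,·,·)`, the two
eigenvalue identities give `∫_{B₂} G(x,·) ≤ m⁻¹ (-λ₀)⁻¹ φ₀(x)` and
`∫_{B₂} p(t₀,x,·) ≤ m⁻¹ e^{λ₀ t₀} φ₀(x)`; the hypothesis on `D ∖ B₂` turns the second bound
into a bound on `∫_{D∖B₂} G(x,·)`.
-/

open MeasureTheory Set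

section

variable {α : Type*} [MeasurableSpace α] {μ : Measure α} {f φ : α → ℝ} {s B : Set α}

theorem setIntegral_le_inv_mul_setIntegral_mul_of_le {m : ℝ} (hs : MeasurableSet s)
    (hB : MeasurableSet B) (hBs : B ⊆ s) (hf : ∀ z ∈ s, 0 ≤ f z) (hφ : ∀ z ∈ s, 0 ≤ φ z)
    (hm : 0 < m) (hmφ : ∀ z ∈ B, m ≤ φ z) (hfφ : IntegrableOn (fun z => f z * φ z) s μ) :
    ∫ z in B, f z ∂μ ≤ m⁻¹ * ∫ z in s, f z * φ z ∂μ := by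
  have hfφ_nonneg : ∀ z ∈ s, 0 ≤ f z * φ z := fun z hz => mul_nonneg (hf z hz) (hφ z hz)
  by_cases hfB : IntegrableOn f B μ
  · have hf_le : ∀ z ∈ B, f z ≤ m⁻¹ * (f z * φ z) := fun z hz =>
      calc f z = m⁻¹ * (f z * m) := by field_simp
        _ ≤ m⁻¹ * (f z * φ z) := by gcongr; exacts [hf z (hBs hz), hmφ z hz]
    calc ∫ z in B, f z ∂μ
        ≤ ∫ z in B, m⁻¹ * (f z * φ z) ∂μ :=
          setIntegral_mono_on hfB ((hfφ.mono_set hBs).const_mul _) hB hf_le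
      _ = m⁻¹ * ∫ z in B, f z * φ z ∂μ := integral_const_mul _ _
      _ ≤ m⁻¹ * ∫ z in s, f z * φ z ∂μ := by
          gcongr
          exact (ae_restrict_mem hs).mono hfφ_nonneg
  · rw [integral_undef hfB]
    exact mul_nonneg (inv_nonneg.2 hm.le) (setIntegral_nonneg hs hfφ_nonneg)

theorem setIntegral_le_add_of_le_of_diff_le {a b : ℝ} (hB : MeasurableSet B) (hBs : B ⊆ s)
    (hdiff : ∫ z in s \ B, f z ∂μ ≤ a) (hB_le : ∫ z in B, f z ∂μ ≤ b) (hab : 0 ≤ a + b) :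
    ∫ z in s, f z ∂μ ≤ a + b := by
  by_cases hfs : IntegrableOn f s μ
  · rw [← sdiff_union_of_subset hBs,
      setIntegral_union disjoint_sdiff_left hB (hfs.mono_set sdiff_subset) (hfs.mono_set hBs)]
    exact add_le_add hdiff hB_le
  · rwa [integral_undef hfs]

end

theorem expected_exit_time_le_eigenfunction_general
    {d : ℕ} (D : Set (EuclideanSpace ℝ (Fin d)))
    (hopen : IsOpen D)
    (p : ℝ → EuclideanSpace ℝ (Fin d) → EuclideanSpace ℝ (Fin d) → ℝ)
    (hpnonneg : ∀ t > (0:ℝ), ∀ x ∈ D, ∀ y ∈ D, 0 ≤ p t x y)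
    (G : EuclideanSpace ℝ (Fin d) → EuclideanSpace ℝ (Fin d) → ℝ)
    (hG : ∀ x ∈ D, ∀ y ∈ D, G x y = ∫ t in Ioi (0:ℝ), p t x y)
    (lam₀ : ℝ) (hlam₀ : lam₀ < 0) (t₀ : ℝ) (ht₀ : 0 < t₀)
    (φ₀ : EuclideanSpace ℝ (Fin d) → ℝ)
    (hφ₀pos : ∀ x ∈ D, 0 < φ₀ x)
    (hGeig : ∀ x ∈ D, (∫ z in D, G x z * φ₀ z) = (-lam₀)⁻¹ * φ₀ x)
    (hpeig : ∀ x ∈ D, (∫ z in D, p t₀ x z * φ₀ z) = Real.exp (lam₀ * t₀) * φ₀ x)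
    (B₂ : Set (EuclideanSpace ℝ (Fin d))) (hB₂ : B₂ ⊆ D) (hB₂m : MeasurableSet B₂)
    (hinf : 0 < sInf (φ₀ '' B₂))
    (c₁ : ℝ) (hc₁ : 0 < c₁)
    (hmain : ∀ x ∈ D, (∫ z in D \ B₂, G x z) ≤ c₁ * ∫ z in B₂, p t₀ x z) :
    ∃ C > (0:ℝ), ∀ x ∈ D, (∫ z in D, G x z) ≤ C * φ₀ x := by
  set m := sInf (φ₀ '' B₂)
  have hmφ : ∀ z ∈ B₂, m ≤ φ₀ z := fun z hz =>
    csInf_le ⟨0, forall_mem_image.2 fun w hw => (hφ₀pos w (hB₂ hw)).le⟩ (mem_image_of_mem φ₀ hz)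
  have hlam : 0 < -lam₀ := neg_pos.2 hlam₀
  refine ⟨c₁ * m⁻¹ * Real.exp (lam₀ * t₀) + m⁻¹ * (-lam₀)⁻¹, by positivity, fun x hx => ?_⟩
  have hφx := hφ₀pos x hx
  have hφ₀nonneg : ∀ z ∈ D, 0 ≤ φ₀ z := fun z hz => (hφ₀pos z hz).le
  have hGnonneg : ∀ z ∈ D, 0 ≤ G x z := fun z hz => (hG x hx z hz).symm ▸
    setIntegral_nonneg measurableSet_Ioi fun t ht => hpnonneg t ht x hx z hz
  have hGφ : IntegrableOn (fun z => G x z * φ₀ z) D :=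
    .of_integral_ne_zero (by rw [hGeig x hx]; positivity)
  have hpφ : IntegrableOn (fun z => p t₀ x z * φ₀ z) D :=
    .of_integral_ne_zero (by rw [hpeig x hx]; positivity)
  have hG_B₂ : ∫ z in B₂, G x z ≤ m⁻¹ * ((-lam₀)⁻¹ * φ₀ x) := hGeig x hx ▸
    setIntegral_le_inv_mul_setIntegral_mul_of_le hopen.measurableSet hB₂m hB₂ hGnonneg
      hφ₀nonneg hinf hmφ hGφ
  have hp_B₂ : ∫ z in B₂, p t₀ x z ≤ m⁻¹ * (Real.exp (lam₀ * t₀) * φ₀ x) := hpeig x hx ▸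
    setIntegral_le_inv_mul_setIntegral_mul_of_le hopen.measurableSet hB₂m hB₂
      (hpnonneg t₀ ht₀ x hx) hφ₀nonneg hinf hmφ hpφ
  calc ∫ z in D, G x z
      ≤ c₁ * (m⁻¹ * (Real.exp (lam₀ * t₀) * φ₀ x)) + m⁻¹ * ((-lam₀)⁻¹ * φ₀ x) :=
        setIntegral_le_add_of_le_of_diff_le hB₂m hB₂
          ((hmain x hx).trans (by gcongr)) hG_B₂ (by positivity)
    _ = (c₁ * m⁻¹ * Real.exp (lam₀ * t₀) + m⁻¹ * (-lam₀)⁻¹) * φ₀ x := by ring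

/-- **Lemma 3.7 of Kim–Song** in analytic form: `p` is the transition density of a killed
non-symmetric Lévy process on a nonempty bounded open set `D`, `G(x,y) = ∫_0^∞ p(t,x,y) dt`
(assumed finite) its Green function, `φ₀` a bounded strictly positive principal
eigenfunction with eigenvalue `λ₀ < 0` (for `G` and for `p(t₀,·,·)`). If `φ₀` is bounded
away from `0` on `B₂ ⊆ D` and `∫_{D∖B₂} G(x,z) dz ≤ c₁ ∫_{B₂} p(t₀,x,z) dz`, then the
expected exit time `∫_D G(x,z) dz` is dominated by `C φ₀(x)`. -/
theorem expected_exit_time_le_eigenfunction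
    {d : ℕ} (D : Set (EuclideanSpace ℝ (Fin d)))
    (hne : D.Nonempty) (hopen : IsOpen D) (hbdd : Bornology.IsBounded D)
    (p : ℝ → EuclideanSpace ℝ (Fin d) → EuclideanSpace ℝ (Fin d) → ℝ)
    (hpmeas : Measurable (fun q : ℝ × EuclideanSpace ℝ (Fin d) × EuclideanSpace ℝ (Fin d) =>
      p q.1 q.2.1 q.2.2))
    (hpnonneg : ∀ t > (0:ℝ), ∀ x ∈ D, ∀ y ∈ D, 0 ≤ p t x y)
    (G : EuclideanSpace ℝ (Fin d) → EuclideanSpace ℝ (Fin d) → ℝ)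
    (hGint : ∀ x ∈ D, ∀ y ∈ D, IntegrableOn (fun t => p t x y) (Ioi (0:ℝ)))
    (hG : ∀ x ∈ D, ∀ y ∈ D, G x y = ∫ t in Ioi (0:ℝ), p t x y)
    (lam₀ : ℝ) (hlam₀ : lam₀ < 0) (t₀ : ℝ) (ht₀ : 0 < t₀)
    (φ₀ : EuclideanSpace ℝ (Fin d) → ℝ)
    (hφ₀pos : ∀ x ∈ D, 0 < φ₀ x) (hφ₀bdd : ∃ M : ℝ, ∀ x ∈ D, φ₀ x ≤ M)
    (hGeig : ∀ x ∈ D, (∫ z in D, G x z * φ₀ z) = (-lam₀)⁻¹ * φ₀ x)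
    (hpeig : ∀ x ∈ D, (∫ z in D, p t₀ x z * φ₀ z) = Real.exp (lam₀ * t₀) * φ₀ x)
    (B₂ : Set (EuclideanSpace ℝ (Fin d))) (hB₂ : B₂ ⊆ D) (hB₂m : MeasurableSet B₂)
    (hinf : 0 < sInf (φ₀ '' B₂))
    (c₁ : ℝ) (hc₁ : 0 < c₁)
    (hmain : ∀ x ∈ D, (∫ z in D \ B₂, G x z) ≤ c₁ * ∫ z in B₂, p t₀ x z) :
    ∃ C > (0:ℝ), ∀ x ∈ D, (∫ z in D, G x z) ≤ C * φ₀ x :=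
  expected_exit_time_le_eigenfunction_general D hopen p hpnonneg G hG lam₀ hlam₀ t₀ ht₀ φ₀ hφ₀pos
    hGeig hpeig B₂ hB₂ hB₂m hinf c₁ hc₁ hmain
end

section
/- Let D be a nonempty bounded open subset of ℝ^d and let p : (0,∞) × D × D → (0,∞) satisfy the Chapman–Kolmogorov (semigroup) property with respect to Lebesgue measure on D: p(s+t,x,y) = ∫_D p(s,x,z) p(t,z,y) dz for all s,t > 0 and x,y ∈ D. Fix t > 0 and c₁ > 0 and suppose that p(t,x,y)/p(t,x,z) ≥ c₁ · p(t,v,y)/p(t,v,z) for all v,x,y,z ∈ D. Then for every s > t and all v,x,y,z ∈ D: p(s,y,x)/p(s,z,x) ≥ c₁ · p(t,y,v)/p(t,z,v) and p(s,x,y)/p(s,x,z) ≤ c₁^{-1} · p(t,v,y)/p(t,v,z). -/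
open MeasureTheory Set

/-- **Lemma 3.11(1) of Kim–Song** (Lemma 5.5(1) of [KS5]): for a strictly positive kernel
`p` on a nonempty bounded open set `D` satisfying Chapman–Kolmogorov, if
`p(t,x,y)/p(t,x,z) ≥ c₁ p(t,v,y)/p(t,v,z)` for all `v,x,y,z ∈ D`, then for every `s > t`,
`p(s,y,x)/p(s,z,x) ≥ c₁ p(t,y,v)/p(t,z,v)` and
`p(s,x,y)/p(s,x,z) ≤ c₁⁻¹ p(t,v,y)/p(t,v,z)` for all `v,x,y,z ∈ D`. -/
theorem ratio_propagation_forward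
    {d : ℕ} (D : Set (EuclideanSpace ℝ (Fin d)))
    (hne : D.Nonempty) (hopen : IsOpen D) (hbdd : Bornology.IsBounded D)
    (p : ℝ → EuclideanSpace ℝ (Fin d) → EuclideanSpace ℝ (Fin d) → ℝ)
    (hppos : ∀ t > (0:ℝ), ∀ x ∈ D, ∀ y ∈ D, 0 < p t x y)
    (hCK : ∀ s > (0:ℝ), ∀ t > (0:ℝ), ∀ x ∈ D, ∀ y ∈ D,
      p (s + t) x y = ∫ z in D, p s x z * p t z y)
    (t : ℝ) (ht : 0 < t) (c₁ : ℝ) (hc₁ : 0 < c₁)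
    (hratio : ∀ v ∈ D, ∀ x ∈ D, ∀ y ∈ D, ∀ z ∈ D,
      c₁ * (p t v y / p t v z) ≤ p t x y / p t x z) :
    ∀ s > t, ∀ v ∈ D, ∀ x ∈ D, ∀ y ∈ D, ∀ z ∈ D,
      c₁ * (p t y v / p t z v) ≤ p s y x / p s z x ∧
      p s x y / p s x z ≤ c₁⁻¹ * (p t v y / p t v z) := by
  intro s hs v hv x hx y hy z hz
  have hs0 : 0 < s := ht.trans hs
  have hr : 0 < s - t := sub_pos.mpr hs
  have hD : MeasurableSet D := hopen.measurableSet
  have Pyx : 0 < p s y x := hppos s hs0 y hy x hx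
  have Pzx : 0 < p s z x := hppos s hs0 z hz x hx
  have Pxy : 0 < p s x y := hppos s hs0 x hx y hy
  have Pxz : 0 < p s x z := hppos s hs0 x hx z hz
  have Pyv : 0 < p t y v := hppos t ht y hy v hv
  have Pzv : 0 < p t z v := hppos t ht z hz v hv
  have Pvy : 0 < p t v y := hppos t ht v hv y hy
  have Pvz : 0 < p t v z := hppos t ht v hv z hz
  have hts : t + (s - t) = s := by ring
  have hst : (s - t) + t = s := by ring
  have e1 : p s y x = ∫ w in D, p t y w * p (s - t) w x := by
    have h := hCK t ht (s - t) hr y hy x hx; rwa [hts] at h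
  have e2 : p s z x = ∫ w in D, p t z w * p (s - t) w x := by
    have h := hCK t ht (s - t) hr z hz x hx; rwa [hts] at h
  have e3 : p s x y = ∫ w in D, p (s - t) x w * p t w y := by
    have h := hCK (s - t) hr t ht x hx y hy; rwa [hst] at h
  have e4 : p s x z = ∫ w in D, p (s - t) x w * p t w z := by
    have h := hCK (s - t) hr t ht x hx z hz; rwa [hst] at h
  have hI1 : Integrable (fun w => p t y w * p (s - t) w x)
      (MeasureTheory.volume.restrict D) := by
    by_contra h; rw [integral_undef h] at e1; exact absurd e1 Pyx.ne'
  have hI2 : Integrable (fun w => p t z w * p (s - t) w x)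
      (MeasureTheory.volume.restrict D) := by
    by_contra h; rw [integral_undef h] at e2; exact absurd e2 Pzx.ne'
  have hI3 : Integrable (fun w => p (s - t) x w * p t w y)
      (MeasureTheory.volume.restrict D) := by
    by_contra h; rw [integral_undef h] at e3; exact absurd e3 Pxy.ne'
  have hI4 : Integrable (fun w => p (s - t) x w * p t w z)
      (MeasureTheory.volume.restrict D) := by
    by_contra h; rw [integral_undef h] at e4; exact absurd e4 Pxz.ne'
  constructor
  · rw [le_div_iff₀ Pzx]
    calc c₁ * (p t y v / p t z v) * p s z x
        = ∫ w in D, c₁ * (p t y v / p t z v) * (p t z w * p (s - t) w x) := by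
          rw [e2]; exact (integral_const_mul _ _).symm
      _ ≤ ∫ w in D, p t y w * p (s - t) w x := by
          apply integral_mono_ae (hI2.const_mul _) hI1
          filter_upwards [ae_restrict_mem hD] with w hw
          have h := hratio z hz y hy w hw v hv
          have Pzw : 0 < p t z w := hppos t ht z hz w hw
          have Pyw : 0 < p t y w := hppos t ht y hy w hw
          have Pwx : 0 < p (s - t) w x := hppos (s - t) hr w hw x hx
          rw [← mul_div_assoc] at h
          have h' := (div_le_div_iff₀ Pzv Pyv).mp h
          have key : c₁ * (p t y v / p t z v) * p t z w ≤ p t y w := by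
            rw [show c₁ * (p t y v / p t z v) * p t z w
                = (c₁ * p t z w * p t y v) / p t z v by ring,
              div_le_iff₀ Pzv]
            calc c₁ * p t z w * p t y v ≤ p t y w * p t z v := h'
              _ = p t y w * p t z v := rfl
          have := mul_le_mul_of_nonneg_right key Pwx.le
          simpa [mul_assoc] using this
      _ = p s y x := e1.symm
  · rw [div_le_iff₀ Pxz]
    calc p s x y = ∫ w in D, p (s - t) x w * p t w y := e3
      _ ≤ ∫ w in D, c₁⁻¹ * (p t v y / p t v z) * (p (s - t) x w * p t w z) := by
          apply integral_mono_ae hI3 (hI4.const_mul _)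
          filter_upwards [ae_restrict_mem hD] with w hw
          have h := hratio v hv w hw z hz y hy
          have Pwz : 0 < p t w z := hppos t ht w hw z hz
          have Pwy : 0 < p t w y := hppos t ht w hw y hy
          have Pxw : 0 < p (s - t) x w := hppos (s - t) hr x hx w hw
          rw [← mul_div_assoc] at h
          have h' := (div_le_div_iff₀ Pvy Pwy).mp h
          have key : p t w y ≤ c₁⁻¹ * (p t v y / p t v z) * p t w z := by
            rw [show c₁⁻¹ * (p t v y / p t v z) * p t w z
                = (p t v y * p t w z) / (c₁ * p t v z) by
                  field_simp,
              le_div_iff₀ (by positivity)]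
            calc p t w y * (c₁ * p t v z) = c₁ * p t v z * p t w y := by ring
              _ ≤ p t w z * p t v y := h'
              _ = p t v y * p t w z := by ring
          have := mul_le_mul_of_nonneg_left key Pxw.le
          calc p (s - t) x w * p t w y
              ≤ p (s - t) x w * (c₁⁻¹ * (p t v y / p t v z) * p t w z) := this
            _ = c₁⁻¹ * (p t v y / p t v z) * (p (s - t) x w * p t w z) := by ring
      _ = c₁⁻¹ * (p t v y / p t v z) * p s x z := by
          rw [integral_const_mul, ← e4]
end

section
/- Let D be a nonempty bounded open subset of ℝ^d and let p : (0,∞) × D × D → (0,∞) satisfy the Chapman–Kolmogorov (semigroup) property with respect to Lebesgue measure on D: p(s+t,x,y) = ∫_D p(s,x,z) p(t,z,y) dz for all s,t > 0 and x,y ∈ D. Fix t > 0 and c₂ > 0 and suppose that p(t,y,x)/p(t,z,x) ≥ c₂ · p(t,y,v)/p(t,z,v) for all v,x,y,z ∈ D. Then for every s > t and all v,x,y,z ∈ D: p(s,x,y)/p(s,x,z) ≥ c₂ · p(t,v,y)/p(t,v,z) and p(s,y,x)/p(s,z,x) ≤ c₂^{-1} · p(t,y,v)/p(t,z,v). -/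
open MeasureTheory Set

/-- **Lemma 3.11(2) of Kim–Song** (Lemma 5.5(2) of [KS5]): for a strictly positive kernel
`p` on a nonempty bounded open set `D` satisfying Chapman–Kolmogorov, if
`p(t,y,x)/p(t,z,x) ≥ c₂ p(t,y,v)/p(t,z,v)` for all `v,x,y,z ∈ D`, then for every `s > t`,
`p(s,x,y)/p(s,x,z) ≥ c₂ p(t,v,y)/p(t,v,z)` and
`p(s,y,x)/p(s,z,x) ≤ c₂⁻¹ p(t,y,v)/p(t,z,v)` for all `v,x,y,z ∈ D`. -/
theorem ratio_propagation_forward_dual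
    {d : ℕ} (D : Set (EuclideanSpace ℝ (Fin d)))
    (hne : D.Nonempty) (hopen : IsOpen D) (hbdd : Bornology.IsBounded D)
    (p : ℝ → EuclideanSpace ℝ (Fin d) → EuclideanSpace ℝ (Fin d) → ℝ)
    (hppos : ∀ t > (0:ℝ), ∀ x ∈ D, ∀ y ∈ D, 0 < p t x y)
    (hCK : ∀ s > (0:ℝ), ∀ t > (0:ℝ), ∀ x ∈ D, ∀ y ∈ D,
      p (s + t) x y = ∫ z in D, p s x z * p t z y)
    (t : ℝ) (ht : 0 < t) (c₂ : ℝ) (hc₂ : 0 < c₂)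
    (hratio : ∀ v ∈ D, ∀ x ∈ D, ∀ y ∈ D, ∀ z ∈ D,
      c₂ * (p t y v / p t z v) ≤ p t y x / p t z x) :
    ∀ s > t, ∀ v ∈ D, ∀ x ∈ D, ∀ y ∈ D, ∀ z ∈ D,
      c₂ * (p t v y / p t v z) ≤ p s x y / p s x z ∧
      p s y x / p s z x ≤ c₂⁻¹ * (p t y v / p t z v) := by
  -- integrability of CK integrands
  have hint : ∀ a > (0:ℝ), ∀ b > (0:ℝ), ∀ x ∈ D, ∀ y ∈ D,
      IntegrableOn (fun w => p a x w * p b w y) D := by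
    intro a ha b hb x hx y hy
    by_contra h
    have h0 : (∫ w in D, p a x w * p b w y) = 0 := integral_undef h
    have := hCK a ha b hb x hx y hy
    have hpos := hppos (a + b) (by linarith) x hx y hy
    rw [this, h0] at hpos
    exact lt_irrefl 0 hpos
  intro s hs v hv x hx y hy z hz
  have hu : 0 < s - t := by linarith
  have hs0 : 0 < s := by linarith
  set u := s - t with hudef
  have hut : u + t = s := by ring
  have htu : t + u = s := by ring
  constructor
  · -- first inequality
    have e1 : p s x y = ∫ w in D, p u x w * p t w y := by
      rw [← hut]; exact hCK u hu t ht x hx y hy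
    have e2 : p s x z = ∫ w in D, p u x w * p t w z := by
      rw [← hut]; exact hCK u hu t ht x hx z hz
    have hptvz : 0 < p t v z := hppos t ht v hv z hz
    have hpt : ∀ w ∈ D,
        c₂ * (p t v y / p t v z) * (p u x w * p t w z) ≤ p u x w * p t w y := by
      intro w hw
      have h1 := hratio z hz y hy w hw v hv
      -- c₂ * (p t w z / p t v z) ≤ p t w y / p t v y
      have hpvy : 0 < p t v y := hppos t ht v hv y hy
      rw [mul_div_assoc'] at h1
      have key := (div_le_div_iff₀ hptvz hpvy).mp h1
      -- c₂ * p t w z * p t v y ≤ p t w y * p t v z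
      have hpu : 0 < p u x w := hppos u hu x hx w hw
      have h2 : c₂ * (p t v y / p t v z) * p t w z ≤ p t w y := by
        rw [mul_div_assoc', div_mul_eq_mul_div, div_le_iff₀ hptvz]
        nlinarith [key]
      nlinarith [mul_le_mul_of_nonneg_left h2 hpu.le]
    have hint1 : IntegrableOn (fun w => p u x w * p t w y) D :=
      hint u hu t ht x hx y hy
    have hint2 : IntegrableOn (fun w => p u x w * p t w z) D :=
      hint u hu t ht x hx z hz
    have hmono := setIntegral_mono_on
      ((hint2.const_mul (c₂ * (p t v y / p t v z))))
      hint1 hopen.measurableSet hpt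
    rw [integral_const_mul] at hmono
    rw [← e1, ← e2] at hmono
    have hpz : 0 < p s x z := hppos s hs0 x hx z hz
    rw [le_div_iff₀ hpz]
    exact hmono
  · -- second inequality
    have e1 : p s y x = ∫ w in D, p t y w * p u w x := by
      rw [← htu]; exact hCK t ht u hu y hy x hx
    have e2 : p s z x = ∫ w in D, p t z w * p u w x := by
      rw [← htu]; exact hCK t ht u hu z hz x hx
    have hpzv : 0 < p t z v := hppos t ht z hz v hv
    have hpt : ∀ w ∈ D,
        p t y w * p u w x ≤ c₂⁻¹ * (p t y v / p t z v) * (p t z w * p u w x) := by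
      intro w hw
      have h1 := hratio w hw v hv y hy z hz
      -- c₂ * (p t y w / p t z w) ≤ p t y v / p t z v
      have hpzw : 0 < p t z w := hppos t ht z hz w hw
      have hpu : 0 < p u w x := hppos u hu w hw x hx
      have h2 : p t y w ≤ c₂⁻¹ * (p t y v / p t z v) * p t z w := by
        rw [mul_div_assoc'] at h1
        have key := (div_le_div_iff₀ hpzw hpzv).mp h1
        -- c₂ * p t y w * p t z v ≤ p t y v * p t z w
        rw [mul_div_assoc', div_mul_eq_mul_div, le_div_iff₀ hpzv, mul_assoc,
          inv_mul_eq_div, le_div_iff₀ hc₂]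
        nlinarith [key]
      nlinarith [mul_le_mul_of_nonneg_right h2 hpu.le]
    have hint1 : IntegrableOn (fun w => p t y w * p u w x) D :=
      hint t ht u hu y hy x hx
    have hint2 : IntegrableOn (fun w => p t z w * p u w x) D :=
      hint t ht u hu z hz x hx
    have hmono := setIntegral_mono_on hint1
      ((hint2.const_mul (c₂⁻¹ * (p t y v / p t z v))))
      hopen.measurableSet hpt
    rw [integral_const_mul] at hmono
    rw [← e1, ← e2] at hmono
    have hpz : 0 < p s z x := hppos s hs0 z hz x hx
    rw [div_le_iff₀ hpz]
    exact hmono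
end
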